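/- arXiv:1811.01036 — 6 statements merged into one kernel-verified Lean document; each statement's English description precedes it below -/
import Mathlib

section
/- Let d ≥ 1 and let π be a weight on T^d with π(β) ≥ 1 for every β ∈ T^d. If μ is a nonnegative Borel measure on the distinguished boundary (∂T)^d with finite energy E_π[μ] < ∞, then for every index 1 ≤ j ≤ d and every boundary point ω_j ∈ ∂T, the slice {ω ∈ (∂T)^d : the j-th coordinate of ω equals ω_j} has μ-measure zero. -/
open MeasureTheory ENNReal Set
open scoped Classical

noncomputable section

/-- Vertices of the dyadic tree `T`: finite binary strings, rooted at the empty string. -/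
abbrev TreeV : Type := List Bool

/-- The boundary `∂T`: infinite binary sequences. -/
abbrev TreeB : Type := ℕ → Bool

/-- The closure `T̄ = T ∪ ∂T`. -/
abbrev TreeBar : Type := TreeV ⊕ TreeB

/-- Every subset of the (countable) vertex set is Borel. -/
instance : MeasurableSpace TreeV := ⊤

/-- `ancOf α β` means `α ≤ β` in `T̄`: `β` is an ancestor (initial segment) of `α`, or `α = β`. -/
def ancOf : TreeBar → TreeBar → Prop
  | Sum.inl a, Sum.inl b => b <+: a
  | Sum.inr ω, Sum.inl b => ∀ i : Fin b.length, b.get i = ω i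
  | Sum.inl _, Sum.inr _ => False
  | Sum.inr ω, Sum.inr ω' => ω = ω'

/-- `d_T(a)`: the number of ancestors of the vertex `a` in `T`, including itself. -/
def dT (a : TreeV) : ℕ := a.length + 1

/-- Vertices of the `d`-tree `T^d`. -/
abbrev VtxD (d : ℕ) : Type := Fin d → TreeV

/-- `T̄^d`. -/
abbrev BarD (d : ℕ) : Type := Fin d → TreeBar

/-- The distinguished boundary `(∂T)^d`. -/
abbrev BndD (d : ℕ) : Type := Fin d → TreeB

/-- Embedding of `T^d` into `T̄^d`. -/
def vEmb {d : ℕ} (α : VtxD d) : BarD d := fun i => Sum.inl (α i)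

/-- Embedding of `(∂T)^d` into `T̄^d`. -/
def bEmb {d : ℕ} (ω : BndD d) : BarD d := fun i => Sum.inr (ω i)

/-- `γ ≤ β`, for `γ ∈ T̄^d` and a vertex `β ∈ T^d` (componentwise order). -/
def vleOf {d : ℕ} (γ : BarD d) (β : VtxD d) : Prop := ∀ i, ancOf (γ i) (Sum.inl (β i))

/-- The successor set `S(β) ⊆ T̄^d` of a vertex `β ∈ T^d`. -/
def succSet {d : ℕ} (β : VtxD d) : Set (BarD d) := {γ | vleOf γ β}

/-- The boundary successor set `∂S(β)`, viewed as a subset of `(∂T)^d`. -/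
def bSucc {d : ℕ} (β : VtxD d) : Set (BndD d) := {ω | vleOf (bEmb ω) β}

/-- One–variable successor set `S(b) ⊆ T̄`. -/
def succ1 (b : TreeV) : Set TreeBar := {γ | ancOf γ (Sum.inl b)}

/-- One–variable boundary successor set `∂S(b) ⊆ ∂T`. -/
def bSucc1 (b : TreeV) : Set TreeB := {ω | ancOf (Sum.inr ω) (Sum.inl b)}

/-- The Hardy operator `(If)(α) = ∑_{β ∈ T^d, β ≥ α} f(β) π(β)` on `T^d`. -/
def hardy {d : ℕ} (π f : VtxD d → ℝ≥0∞) (α : BarD d) : ℝ≥0∞ :=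
  ∑' β : VtxD d, Set.indicator {β : VtxD d | vleOf α β} (fun β => f β * π β) β

/-- The capacity `cap_π E` of a set `E ⊆ T̄^d`. -/
def capac {d : ℕ} (π : VtxD d → ℝ≥0∞) (E : Set (BarD d)) : ℝ≥0∞ :=
  ⨅ (f : VtxD d → ℝ≥0∞) (_ : ∀ α ∈ E, 1 ≤ hardy π f α), ∑' β : VtxD d, f β ^ 2 * π β

/-- The potential `V_π^μ(α) = ∑_{β ∈ T^d, β ≥ α} μ(S(β)) π(β)` of a measure on `T̄^d`. -/
def potential {d : ℕ} (π : VtxD d → ℝ≥0∞) (μ : Measure (BarD d)) (α : BarD d) : ℝ≥0∞ :=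
  ∑' β : VtxD d, Set.indicator {β : VtxD d | vleOf α β} (fun β => μ (succSet β) * π β) β

/-- The energy `E_π[μ] = ∑_{β ∈ T^d} μ(S(β))² π(β)` of a measure on `T̄^d`. -/
def energy {d : ℕ} (π : VtxD d → ℝ≥0∞) (μ : Measure (BarD d)) : ℝ≥0∞ :=
  ∑' β : VtxD d, μ (succSet β) ^ 2 * π β

/-- The potential of a measure on the distinguished boundary `(∂T)^d`. -/
def potentialB {d : ℕ} (π : VtxD d → ℝ≥0∞) (μ : Measure (BndD d)) (α : BarD d) : ℝ≥0∞ :=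
  ∑' β : VtxD d, Set.indicator {β : VtxD d | vleOf α β} (fun β => μ (bSucc β) * π β) β

/-- The energy of a measure on the distinguished boundary `(∂T)^d`. -/
def energyB {d : ℕ} (π : VtxD d → ℝ≥0∞) (μ : Measure (BndD d)) : ℝ≥0∞ :=
  ∑' β : VtxD d, μ (bSucc β) ^ 2 * π β

/-- One–variable Hardy operator. -/
def hardy1 (π f : TreeV → ℝ≥0∞) (α : TreeBar) : ℝ≥0∞ :=
  ∑' b : TreeV, Set.indicator {b : TreeV | ancOf α (Sum.inl b)} (fun b => f b * π b) b

/-- One–variable capacity of `E ⊆ T̄`. -/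
def capac1 (π : TreeV → ℝ≥0∞) (E : Set TreeBar) : ℝ≥0∞ :=
  ⨅ (f : TreeV → ℝ≥0∞) (_ : ∀ α ∈ E, 1 ≤ hardy1 π f α), ∑' b : TreeV, f b ^ 2 * π b

/-- One–variable potential. -/
def potential1 (π : TreeV → ℝ≥0∞) (μ : Measure TreeBar) (α : TreeBar) : ℝ≥0∞ :=
  ∑' b : TreeV, Set.indicator {b : TreeV | ancOf α (Sum.inl b)} (fun b => μ (succ1 b) * π b) b

/-- One–variable energy. -/
def energy1 (π : TreeV → ℝ≥0∞) (μ : Measure TreeBar) : ℝ≥0∞ :=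
  ∑' b : TreeV, μ (succ1 b) ^ 2 * π b

/-- `d_π(α∧β) = ∑_{γ ∈ T^d, γ ≥ α, γ ≥ β} π(γ)`: the weighted count of common ancestors,
i.e. of the predecessors of the least common ancestor `α∧β`. -/
def dwedge {d : ℕ} (π : VtxD d → ℝ≥0∞) (α β : BarD d) : ℝ≥0∞ :=
  ∑' γ : VtxD d, Set.indicator {γ : VtxD d | vleOf α γ ∧ vleOf β γ} π γ

/-- One–variable `d_π(α∧β)`. -/
def dwedge1 (π : TreeV → ℝ≥0∞) (α β : TreeBar) : ℝ≥0∞ :=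
  ∑' c : TreeV, Set.indicator {c : TreeV | ancOf α (Sum.inl c) ∧ ancOf β (Sum.inl c)} π c

/-- The standard polynomial product weight `π(β) = ∏_j 2^{s_j d_T(β_j)}`. -/
def stdW (d : ℕ) (s : Fin d → ℝ) : VtxD d → ℝ≥0∞ :=
  fun β => ∏ j, (2 : ℝ≥0∞) ^ (s j * (dT (β j) : ℝ))

/-- The one–variable standard polynomial weight `π₁(γ) = 2^{s₁ d_T(γ)}`. -/
def stdW1 (s₁ : ℝ) : TreeV → ℝ≥0∞ := fun γ => (2 : ℝ≥0∞) ^ (s₁ * (dT γ : ℝ))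

/-- `M` is the Borel measure on `∂T` determined by `M(∂S(a)) = 2^{-d_T(a)+1}` for all `a ∈ T`. -/
def IsStdM (M : Measure TreeB) : Prop :=
  ∀ a : TreeV, M (bSucc1 a) = (2⁻¹ : ℝ≥0∞) ^ a.length

/-- `rho g τ` is the fraction of a unit mass placed at `τ ∈ T̄` that lands in `∂S(g)` when the
mass of every vertex is spread uniformly (w.r.t. `M`) over its boundary successor set, while
mass already on the boundary is kept in place. -/
def rho (g : TreeV) : TreeBar → ℝ≥0∞
  | Sum.inl b =>
      if g <+: b then 1 else if b <+: g then (2⁻¹ : ℝ≥0∞) ^ (g.length - b.length) else 0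
  | Sum.inr ω => if ancOf (Sum.inr ω) (Sum.inl g) then 1 else 0

/-- `IsBdryProj μ μb`: `μb` is the boundary projection of `μ`, characterised by its values on
the cylinders `∂S(γ)`, `γ ∈ T^d`. -/
def IsBdryProj {d : ℕ} (μ : Measure (BarD d)) (μb : Measure (BndD d)) : Prop :=
  ∀ γ : VtxD d, μb (bSucc γ) = ∫⁻ τ, ∏ j, rho (γ j) (τ j) ∂μ

/-- The set of points of `T̄^d` all of whose coordinates lie on the boundary `∂T`,
i.e. the distinguished boundary viewed inside `T̄^d`. -/
def bdryD (d : ℕ) : Set (BarD d) := {γ | ∀ i, ∃ ω : TreeB, γ i = Sum.inr ω}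

/-- The boundary projection `S_b(E) = ⋃_{β ∈ E} ∂S(β) ⊆ (∂T)^d` of `E ⊆ T̄^d`,
viewed inside `T̄^d`. -/
def sbProj {d : ℕ} (E : Set (BarD d)) : Set (BarD d) :=
  {γ | γ ∈ bdryD d ∧ ∃ β ∈ E, ∀ i, ancOf (γ i) (β i)}

/-- The maximal function `M_μ g (ω) = sup_{α ∈ T^d, α ≥ ω} (1/μ(∂S(α))) ∫_{∂S(α)} g dμ`. -/
def maxFn {d : ℕ} (μ : Measure (BndD d)) (g : BndD d → ℝ≥0∞) (ω : BndD d) : ℝ≥0∞ :=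
  ⨆ (α : VtxD d) (_ : ω ∈ bSucc α), (μ (bSucc α))⁻¹ * ∫⁻ x in bSucc α, g x ∂μ

/-- Embedding of `T̄` into `ℕ → Option Bool`, recording the binary digits. -/
def treeBarEmbed : TreeBar → (ℕ → Option Bool)
  | Sum.inl a => fun n => a[n]?
  | Sum.inr ω => fun n => some (ω n)

instance : TopologicalSpace (Option Bool) := ⊥

/-- The natural compact topology on `T̄`, induced by the metric `δ`; equivalently, the topology
induced from the product topology on `ℕ → Option Bool`. -/
instance : TopologicalSpace TreeBar := TopologicalSpace.induced treeBarEmbed inferInstance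

/-- If `π ≥ 1` on `T^d` and `μ ≥ 0` is a Borel measure on the distinguished
boundary `(∂T)^d` with finite energy, then every slice `{ω : ω_j = ω_j⁰}` is `μ`-null. -/
theorem statement0 (d : ℕ) (hd : 1 ≤ d) (π : VtxD d → ℝ≥0∞) (hπ : ∀ β, 1 ≤ π β)
    (μ : Measure (BndD d)) (hE : energyB π μ ≠ ⊤) (j : Fin d) (ωj : TreeB) :
    μ {ω : BndD d | ω j = ωj} = 0 := by
  by_contra h
  set B : ℕ → VtxD d := fun n i => if i = j then List.ofFn (fun k : Fin n => ωj k) else []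
    with hB
  have hinj : Function.Injective B := by
    intro m n hmn
    have h1 : (B m j).length = (B n j).length := by rw [hmn]
    simpa [hB, List.length_ofFn] using h1
  have hsub : ∀ n, {ω : BndD d | ω j = ωj} ⊆ bSucc (B n) := by
    intro n ω hω i
    by_cases hij : i = j
    · subst hij
      simp only [hB, if_pos rfl, bEmb, ancOf]
      intro k
      simp only [List.get_ofFn]
      exact (congrFun hω _).symm
    · simp only [hB, if_neg hij, bEmb, ancOf]
      exact fun k => k.elim0
  have hle : ∀ n, μ {ω : BndD d | ω j = ωj} ^ 2 ≤ μ (bSucc (B n)) ^ 2 * π (B n) := by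
    intro n
    calc μ {ω : BndD d | ω j = ωj} ^ 2 ≤ μ (bSucc (B n)) ^ 2 :=
          pow_le_pow_left' (measure_mono (hsub n)) 2
      _ ≤ μ (bSucc (B n)) ^ 2 * π (B n) := le_mul_of_one_le_right' (hπ _)
  have htop : (⊤ : ℝ≥0∞) ≤ energyB π μ := by
    calc (⊤ : ℝ≥0∞) = ∑' _ : ℕ, μ {ω : BndD d | ω j = ωj} ^ 2 :=
          (ENNReal.tsum_const_eq_top_of_ne_zero (pow_ne_zero 2 h)).symm
      _ ≤ ∑' n, μ (bSucc (B n)) ^ 2 * π (B n) := ENNReal.tsum_le_tsum hle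
      _ ≤ ∑' β, μ (bSucc β) ^ 2 * π β := ENNReal.tsum_comp_le_tsum_of_injective hinj _
  exact hE (top_le_iff.mp htop)
end
end

section
/- Let π be a product weight on T^d. Let E ⊆ T̄^d be a Borel set and for each 1 ≤ j ≤ d let E_j ⊆ T̄ be the j-th coordinate projection of E (the set of α_j ∈ T̄ that occur as j-th coordinate of some point of E). Then cap_π E ≤ ∏_{j=1}^d cap_{π_j} E_j. -/
open MeasureTheory ENNReal Set
open scoped Classical

noncomputable section

/-! ### Auxiliary lemmas for `statement1` -/

lemma ancOf_root (γ : TreeBar) : ancOf γ (Sum.inl ([] : TreeV)) := by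
  cases γ with
  | inl a => exact List.nil_prefix
  | inr ω => exact fun i => i.elim0

lemma tsum_pi_prod : ∀ (d : ℕ) (g : Fin d → TreeV → ℝ≥0∞),
    ∑' β : VtxD d, ∏ j, g j (β j) = ∏ j, ∑' b : TreeV, g j b := by
  intro d
  induction d with
  | zero =>
    intro g
    simp [tsum_eq_single (fun i => i.elim0 : VtxD 0)
      (fun b hb => absurd (funext fun i => i.elim0) hb.symm)]
  | succ n ih =>
    intro g
    rw [← Equiv.tsum_eq (Fin.consEquiv fun _ => TreeV) (fun β => ∏ j, g j (β j)),
      ENNReal.tsum_prod']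
    simp only [Fin.consEquiv, Equiv.coe_fn_mk, Fin.prod_univ_succ, Fin.cons_zero, Fin.cons_succ]
    simp only [ENNReal.tsum_mul_left]
    rw [ENNReal.tsum_mul_right, ih fun j => g j.succ]

lemma indicator_pi_prod {d : ℕ} (P : Fin d → TreeV → Prop) (h : Fin d → TreeV → ℝ≥0∞)
    (β : VtxD d) :
    Set.indicator {β : VtxD d | ∀ j, P j (β j)} (fun β => ∏ j, h j (β j)) β
      = ∏ j, Set.indicator {b | P j b} (h j) (β j) := by
  by_cases hb : ∀ j, P j (β j)
  · rw [Set.indicator_of_mem (show β ∈ {β : VtxD d | ∀ j, P j (β j)} from hb)]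
    exact Finset.prod_congr rfl fun j _ =>
      (Set.indicator_of_mem (show β j ∈ {b : TreeV | P j b} from hb j) _).symm
  · rw [Set.indicator_of_notMem (show β ∉ {β : VtxD d | ∀ j, P j (β j)} from hb)]
    push_neg at hb
    obtain ⟨j, hj⟩ := hb
    exact (Finset.prod_eq_zero (Finset.mem_univ j)
      (Set.indicator_of_notMem (show β j ∉ {b : TreeV | P j b} from hj) _)).symm

lemma hardy_prod {d : ℕ} (πs f : Fin d → TreeV → ℝ≥0∞) (α : BarD d) :
    hardy (fun β => ∏ j, πs j (β j)) (fun β => ∏ j, f j (β j)) α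
      = ∏ j, hardy1 (πs j) (f j) (α j) := by
  unfold hardy hardy1
  rw [← tsum_pi_prod d fun j b =>
    Set.indicator {b | ancOf (α j) (Sum.inl b)} (fun b => f j b * πs j b) b]
  refine tsum_congr fun β => ?_
  have h1 : (fun β : VtxD d => (∏ j, f j (β j)) * ∏ j, πs j (β j))
      = fun β => ∏ j, (f j (β j) * πs j (β j)) := by
    funext β; rw [← Finset.prod_mul_distrib]
  rw [h1]
  exact indicator_pi_prod (fun j b => ancOf (α j) (Sum.inl b)) (fun j b => f j b * πs j b) β

lemma energy_prod {d : ℕ} (πs f : Fin d → TreeV → ℝ≥0∞) :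
    ∑' β : VtxD d, (∏ j, f j (β j)) ^ 2 * ∏ j, πs j (β j)
      = ∏ j, ∑' b : TreeV, f j b ^ 2 * πs j b := by
  rw [← tsum_pi_prod d fun j b => f j b ^ 2 * πs j b]
  refine tsum_congr fun β => ?_
  rw [← Finset.prod_pow, ← Finset.prod_mul_distrib]

lemma capac_le_prod_energy {d : ℕ} (πs : Fin d → TreeV → ℝ≥0∞) (E : Set (BarD d))
    (f : Fin d → TreeV → ℝ≥0∞)
    (hadm : ∀ j, ∀ a ∈ (fun γ : BarD d => γ j) '' E, 1 ≤ hardy1 (πs j) (f j) a) :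
    capac (fun β => ∏ j, πs j (β j)) E ≤ ∏ j, ∑' b : TreeV, f j b ^ 2 * πs j b := by
  have h1 : ∀ α ∈ E, 1 ≤ hardy (fun β => ∏ j, πs j (β j)) (fun β => ∏ j, f j (β j)) α := by
    intro α hα
    rw [hardy_prod]
    exact Finset.one_le_prod' fun j _ => hadm j _ ⟨α, hα, rfl⟩
  calc capac (fun β => ∏ j, πs j (β j)) E
      ≤ ∑' β : VtxD d, (∏ j, f j (β j)) ^ 2 * ∏ j, πs j (β j) := iInf₂_le _ h1
    _ = ∏ j, ∑' b : TreeV, f j b ^ 2 * πs j b := energy_prod πs f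

lemma capac_le_single {d : ℕ} (πs : Fin d → TreeV → ℝ≥0∞)
    (hπ : ∀ j b, 0 < πs j b ∧ πs j b ≠ ⊤) (E : Set (BarD d)) (j : Fin d)
    (f : TreeV → ℝ≥0∞) (hadm : ∀ a ∈ (fun γ : BarD d => γ j) '' E, 1 ≤ hardy1 (πs j) f a) :
    capac (fun β => ∏ i, πs i (β i)) E
      ≤ (∏ i ∈ Finset.univ.erase j, πs i ([] : TreeV))⁻¹ * ∑' b : TreeV, f b ^ 2 * πs j b := by
  set K : ℝ≥0∞ := ∏ i ∈ Finset.univ.erase j, πs i ([] : TreeV) with hK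
  have hK0 : K ≠ 0 := by
    rw [hK]
    exact Finset.prod_ne_zero_iff.mpr fun i _ => (hπ i []).1.ne'
  have hKt : K ≠ ⊤ := ENNReal.prod_ne_top fun i _ => (hπ i []).2
  -- the embedding of the j-th factor
  set e : TreeV → VtxD d := fun b i => if i = j then b else [] with he
  have hej : ∀ b, e b j = b := fun b => if_pos rfl
  have hinj : Function.Injective e := fun b b' h => by
    have := congrFun h j; rwa [hej, hej] at this
  set F : VtxD d → ℝ≥0∞ := fun β => if β ∈ Set.range e then K⁻¹ * f (β j) else 0 with hF
  have hFe : ∀ b, F (e b) = K⁻¹ * f b := fun b => by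
    rw [hF]; simp only [Set.mem_range, exists_apply_eq_apply, if_true, hej]
  have hπe : ∀ b, (∏ i, πs i (e b i)) = πs j b * K := by
    intro b
    rw [← Finset.mul_prod_erase Finset.univ (fun i => πs i (e b i)) (Finset.mem_univ j), hej]
    congr 1
    exact Finset.prod_congr rfl fun i hi => by
      rw [he]; simp only [if_neg (Finset.ne_of_mem_erase hi)]
  have hvle : ∀ (α : BarD d) (b : TreeV), vleOf α (e b) ↔ ancOf (α j) (Sum.inl b) := by
    intro α b
    constructor
    · intro h; have := h j; rwa [hej] at this
    · intro h i
      by_cases hij : i = j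
      · subst hij; rwa [hej]
      · rw [he]; simp only [if_neg hij]; exact ancOf_root (α i)
  -- hardy computation
  have hhardy : ∀ α : BarD d, hardy (fun β => ∏ i, πs i (β i)) F α = hardy1 (πs j) f (α j) := by
    intro α
    unfold hardy hardy1
    rw [← hinj.tsum_eq]
    · refine tsum_congr fun b => ?_
      by_cases hb : ancOf (α j) (Sum.inl b)
      · rw [Set.indicator_of_mem (show e b ∈ {β : VtxD d | vleOf α β} from (hvle α b).mpr hb),
          Set.indicator_of_mem (show b ∈ {b : TreeV | ancOf (α j) (Sum.inl b)} from hb),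
          ]
        simp only [hFe, hπe]
        calc K⁻¹ * f b * (πs j b * K) = (K⁻¹ * K) * (f b * πs j b) := by ring
          _ = f b * πs j b := by rw [ENNReal.inv_mul_cancel hK0 hKt, one_mul]
      · rw [Set.indicator_of_notMem (show e b ∉ {β : VtxD d | vleOf α β} from
            fun h => hb ((hvle α b).mp h)),
          Set.indicator_of_notMem (show b ∉ {b : TreeV | ancOf (α j) (Sum.inl b)} from hb)]
    · intro β hβ
      by_contra hβr
      refine hβ ?_
      have hF0 : F β = 0 := by rw [hF]; exact if_neg hβr
      simp [Set.indicator_apply, hF0]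
  -- energy computation
  have henergy : ∑' β : VtxD d, F β ^ 2 * ∏ i, πs i (β i)
      = K⁻¹ * ∑' b : TreeV, f b ^ 2 * πs j b := by
    rw [← ENNReal.tsum_mul_left, ← hinj.tsum_eq]
    · refine tsum_congr fun b => ?_
      simp only [hFe, hπe]
      calc (K⁻¹ * f b) ^ 2 * (πs j b * K) = (K⁻¹ * (K⁻¹ * K)) * (f b ^ 2 * πs j b) := by ring
        _ = K⁻¹ * (f b ^ 2 * πs j b) := by rw [ENNReal.inv_mul_cancel hK0 hKt, mul_one]
    · intro β hβ
      by_contra hβr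
      refine hβ ?_
      have hF0 : F β = 0 := by rw [hF]; exact if_neg hβr
      simp [hF0]
  have h1 : ∀ α ∈ E, 1 ≤ hardy (fun β => ∏ i, πs i (β i)) F α := by
    intro α hα
    rw [hhardy]
    exact hadm _ ⟨α, hα, rfl⟩
  calc capac (fun β => ∏ i, πs i (β i)) E
      ≤ ∑' β : VtxD d, F β ^ 2 * ∏ i, πs i (β i) := iInf₂_le F h1
    _ = K⁻¹ * ∑' b : TreeV, f b ^ 2 * πs j b := henergy

lemma exists_delta {d : ℕ} (c : Fin d → ℝ≥0∞) (hc : ∀ j, c j ≠ ⊤) (ε : NNReal) (hε : 0 < ε) :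
    ∃ δ : ℝ≥0∞, δ ≠ 0 ∧ δ ≠ ⊤ ∧ ∏ j, (c j + δ) ≤ (∏ j, c j) + ε := by
  lift c to Fin d → NNReal using hc
  have hcont : Continuous fun δ : NNReal => ∏ j, (c j + δ) :=
    continuous_finset_prod _ fun j _ => continuous_const.add continuous_id
  have h0 : Filter.Tendsto (fun δ : NNReal => ∏ j, (c j + δ)) (nhds 0) (nhds (∏ j, c j)) := by
    simpa using hcont.tendsto 0
  have hev : ∀ᶠ δ : NNReal in nhds 0, ∏ j, (c j + δ) < (∏ j, c j) + ε :=
    h0.eventually (gt_mem_nhds (lt_add_of_pos_right _ hε))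
  obtain ⟨δ, hδpos, hδlt⟩ : ∃ δ : NNReal, δ ∈ Set.Ioi (0:NNReal) ∧
      ∏ j, (c j + δ) < (∏ j, c j) + ε := by
    have h3 : ∀ᶠ δ : NNReal in nhdsWithin 0 (Set.Ioi 0),
        δ ∈ Set.Ioi (0:NNReal) ∧ ∏ j, (c j + δ) < (∏ j, c j) + ε :=
      (eventually_mem_nhdsWithin).and (hev.filter_mono nhdsWithin_le_nhds)
    exact h3.exists
  refine ⟨(δ : ℝ≥0∞), by exact_mod_cast hδpos.ne', ENNReal.coe_ne_top, ?_⟩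
  have := hδlt.le
  push_cast
  exact_mod_cast this

/-- for a product weight, `cap_π E ≤ ∏_j cap_{π_j} E_j` where `E_j` are the
coordinate projections of the Borel set `E ⊆ T̄^d`. -/
theorem statement1 (d : ℕ) (πs : Fin d → TreeV → ℝ≥0∞)
    (hπ : ∀ j b, 0 < πs j b ∧ πs j b ≠ ⊤)
    (E : Set (BarD d)) (hE : MeasurableSet E) :
    capac (fun β => ∏ j, πs j (β j)) E ≤ ∏ j, capac1 (πs j) ((fun γ => γ j) '' E) := by
  have hextract : ∀ (j : Fin d) (t : ℝ≥0∞), capac1 (πs j) ((fun γ : BarD d => γ j) '' E) < t →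
      ∃ f : TreeV → ℝ≥0∞, (∀ α ∈ (fun γ : BarD d => γ j) '' E, 1 ≤ hardy1 (πs j) f α) ∧
        ∑' b : TreeV, f b ^ 2 * πs j b < t := by
    intro j t ht
    rw [capac1] at ht
    obtain ⟨f, hf⟩ := iInf_lt_iff.mp ht
    obtain ⟨hadm, hlt⟩ := iInf_lt_iff.mp hf
    exact ⟨f, hadm, hlt⟩
  by_cases h0 : ∃ j, capac1 (πs j) ((fun γ : BarD d => γ j) '' E) = 0
  · obtain ⟨j, hj⟩ := h0
    have hPz : ∏ j, capac1 (πs j) ((fun γ : BarD d => γ j) '' E) = 0 :=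
      Finset.prod_eq_zero (Finset.mem_univ j) hj
    set K : ℝ≥0∞ := ∏ i ∈ Finset.univ.erase j, πs i ([] : TreeV) with hK
    have hK0 : K ≠ 0 := Finset.prod_ne_zero_iff.mpr fun i _ => (hπ i []).1.ne'
    have hKt : K ≠ ⊤ := ENNReal.prod_ne_top fun i _ => (hπ i []).2
    have hcap : capac (fun β => ∏ j, πs j (β j)) E ≤ 0 := by
      refine ENNReal.le_of_forall_pos_le_add fun ε hε _ => ?_
      rw [zero_add]
      have hδ : (0:ℝ≥0∞) < K * ε :=
        ENNReal.mul_pos hK0 (by exact_mod_cast hε.ne')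
      obtain ⟨f, hadm, hlt⟩ := hextract j (K * ε) (by rw [hj]; exact hδ)
      calc capac (fun β => ∏ j, πs j (β j)) E
          ≤ K⁻¹ * ∑' b : TreeV, f b ^ 2 * πs j b := capac_le_single πs hπ E j f hadm
        _ ≤ K⁻¹ * (K * ε) := mul_le_mul_right hlt.le _
        _ = ε := by rw [← mul_assoc, ENNReal.inv_mul_cancel hK0 hKt, one_mul]
    exact hcap.trans hPz.symm.le
  · push_neg at h0
    by_cases ht : ∃ j, capac1 (πs j) ((fun γ : BarD d => γ j) '' E) = ⊤
    · obtain ⟨j, hj⟩ := ht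
      have hPt : ∏ j, capac1 (πs j) ((fun γ : BarD d => γ j) '' E) = ⊤ := by
        rw [← Finset.mul_prod_erase Finset.univ _ (Finset.mem_univ j), hj,
          ENNReal.top_mul (Finset.prod_ne_zero_iff.mpr fun i _ => h0 i)]
      rw [hPt]; exact le_top
    · push_neg at ht
      refine ENNReal.le_of_forall_pos_le_add fun ε hε hfin => ?_
      obtain ⟨δ, hδ0, hδt, hδle⟩ :=
        exists_delta (fun j => capac1 (πs j) ((fun γ : BarD d => γ j) '' E)) ht ε hε
      have hchoice : ∀ j : Fin d, ∃ f : TreeV → ℝ≥0∞,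
          (∀ α ∈ (fun γ : BarD d => γ j) '' E, 1 ≤ hardy1 (πs j) f α) ∧
            ∑' b : TreeV, f b ^ 2 * πs j b
              < capac1 (πs j) ((fun γ : BarD d => γ j) '' E) + δ :=
        fun j => hextract j _ (ENNReal.lt_add_right (ht j) hδ0)
      choose f hadm hlt using hchoice
      calc capac (fun β => ∏ j, πs j (β j)) E
          ≤ ∏ j, ∑' b : TreeV, f j b ^ 2 * πs j b := capac_le_prod_energy πs E f hadm
        _ ≤ ∏ j, (capac1 (πs j) ((fun γ : BarD d => γ j) '' E) + δ) :=
            Finset.prod_le_prod' fun j _ => (hlt j).le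
        _ ≤ (∏ j, capac1 (πs j) ((fun γ : BarD d => γ j) '' E)) + ε := hδle
end
end

section
/- Let π be a product weight on T^d and let E = E_1 × ⋯ × E_d where each E_j ⊆ T̄ is Borel. Then cap_π E = ∏_{j=1}^d cap_{π_j} E_j. -/
open MeasureTheory ENNReal Set
open scoped Classical

noncomputable section

namespace Statement2Aux

open ENNReal MeasureTheory

/-- square root on ℝ≥0∞ -/
noncomputable def esqrt (x : ℝ≥0∞) : ℝ≥0∞ := x ^ (1/2 : ℝ)

lemma esqrt_sq (x : ℝ≥0∞) : (esqrt x) ^ 2 = x := by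
  rw [esqrt, ← ENNReal.rpow_natCast _ 2, ← ENNReal.rpow_mul]
  norm_num

lemma sq_esqrt (x : ℝ≥0∞) : esqrt (x ^ 2) = x := by
  rw [esqrt, ← ENNReal.rpow_natCast _ 2, ← ENNReal.rpow_mul]
  norm_num

lemma esqrt_mono {x y : ℝ≥0∞} (h : x ≤ y) : esqrt x ≤ esqrt y :=
  ENNReal.rpow_le_rpow h (by norm_num)

lemma esqrt_mul (x y : ℝ≥0∞) : esqrt (x * y) = esqrt x * esqrt y :=
  ENNReal.mul_rpow_of_nonneg x y (by norm_num)

lemma esqrt_ne_zero {x : ℝ≥0∞} (h : x ≠ 0) : esqrt x ≠ 0 := by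
  intro h0
  apply h
  rw [← esqrt_sq x, h0]
  simp

lemma esqrt_ne_top {x : ℝ≥0∞} (h : x ≠ ⊤) : esqrt x ≠ ⊤ := by
  intro h0
  apply h
  rw [← esqrt_sq x, h0]
  simp

instance : MeasurableSingletonClass TreeV := ⟨fun _ => MeasurableSpace.measurableSet_top⟩

lemma meas_all (f : TreeV → ℝ≥0∞) : Measurable f := fun _ _ => MeasurableSpace.measurableSet_top

lemma cauchy_schwarz (p q w : TreeV → ℝ≥0∞) :
    ∑' a, p a * q a * w a ≤ esqrt (∑' a, p a ^ 2 * w a) * esqrt (∑' a, q a ^ 2 * w a) := by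
  have h2 : (2 : ℝ).HolderConjugate 2 := Real.holderConjugate_iff.mpr ⟨one_lt_two, by norm_num⟩
  have key := ENNReal.lintegral_mul_le_Lp_mul_Lq (Measure.count : Measure TreeV) h2
    (meas_all (fun a => p a * esqrt (w a))).aemeasurable
    (meas_all (fun a => q a * esqrt (w a))).aemeasurable
  rw [lintegral_count, lintegral_count, lintegral_count] at key
  have hwl : ∀ a, ((fun a => p a * esqrt (w a)) * fun a => q a * esqrt (w a)) a
      = p a * q a * w a := by
    intro a
    have hw : esqrt (w a) * esqrt (w a) = w a := by rw [← sq, esqrt_sq]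
    simp only [Pi.mul_apply]
    rw [mul_mul_mul_comm, hw]
  have hp2 : ∀ a, (p a * esqrt (w a)) ^ (2:ℝ) = p a ^ 2 * w a := by
    intro a
    rw [ENNReal.rpow_two, mul_pow, esqrt_sq]
  have hq2 : ∀ a, (q a * esqrt (w a)) ^ (2:ℝ) = q a ^ 2 * w a := by
    intro a
    rw [ENNReal.rpow_two, mul_pow, esqrt_sq]
  calc ∑' a, p a * q a * w a
      = ∑' a, ((fun a => p a * esqrt (w a)) * fun a => q a * esqrt (w a)) a :=
        (tsum_congr hwl).symm
    _ ≤ (∑' a, (p a * esqrt (w a)) ^ (2:ℝ)) ^ (1/(2:ℝ))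
        * (∑' a, (q a * esqrt (w a)) ^ (2:ℝ)) ^ (1/(2:ℝ)) := key
    _ = esqrt (∑' a, p a ^ 2 * w a) * esqrt (∑' a, q a ^ 2 * w a) := by
        rw [tsum_congr hp2, tsum_congr hq2]; rfl

lemma minkowski {β : Type*} (u : TreeV → β → ℝ≥0∞) (w : TreeV → ℝ≥0∞) :
    esqrt (∑' a, (∑' b, u a b) ^ 2 * w a) ≤ ∑' b, esqrt (∑' a, (u a b) ^ 2 * w a) := by
  have key : (∑' a, (∑' b, u a b) ^ 2 * w a)
      ≤ (∑' b, esqrt (∑' a, (u a b) ^ 2 * w a)) ^ 2 := by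
    calc ∑' a, (∑' b, u a b) ^ 2 * w a
        = ∑' a, ∑' b, ∑' c, u a b * u a c * w a := by
          refine tsum_congr fun a => ?_
          rw [sq, mul_assoc, ← ENNReal.tsum_mul_right]
          refine tsum_congr fun b => ?_
          rw [← ENNReal.tsum_mul_right, ← ENNReal.tsum_mul_left]
          exact tsum_congr fun c => (mul_assoc _ _ _).symm
      _ = ∑' b, ∑' c, ∑' a, u a b * u a c * w a := by
          rw [ENNReal.tsum_comm]
          exact tsum_congr fun b => ENNReal.tsum_comm
      _ ≤ ∑' b, ∑' c, esqrt (∑' a, (u a b) ^ 2 * w a) * esqrt (∑' a, (u a c) ^ 2 * w a) :=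
          Summable.tsum_le_tsum (fun b => Summable.tsum_le_tsum (fun c => cauchy_schwarz _ _ _)
            ENNReal.summable ENNReal.summable) ENNReal.summable ENNReal.summable
      _ = (∑' b, esqrt (∑' a, (u a b) ^ 2 * w a)) ^ 2 := by
          rw [sq, ← ENNReal.tsum_mul_right]
          exact tsum_congr fun b => ENNReal.tsum_mul_left
  calc esqrt (∑' a, (∑' b, u a b) ^ 2 * w a)
      ≤ esqrt ((∑' b, esqrt (∑' a, (u a b) ^ 2 * w a)) ^ 2) := esqrt_mono key
    _ = _ := sq_esqrt _

end Statement2Aux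

namespace Statement2Aux

open ENNReal MeasureTheory

lemma ancOf_nil (γ : TreeBar) : ancOf γ (Sum.inl ([] : TreeV)) := by
  cases γ with
  | inl a => exact List.nil_prefix
  | inr ω => exact fun i => i.elim0

lemma vleOf_root {d : ℕ} (α : BarD d) : vleOf α (fun _ => ([] : TreeV)) :=
  fun i => ancOf_nil (α i)

/-- the one-variable root test function -/
noncomputable def root1 (π : TreeV → ℝ≥0∞) : TreeV → ℝ≥0∞ :=
  fun b => if b = [] then (π [])⁻¹ else 0

lemma root1_adm (π : TreeV → ℝ≥0∞) (h0 : π [] ≠ 0) (ht : π [] ≠ ⊤) (E : Set TreeBar) :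
    ∀ α ∈ E, 1 ≤ hardy1 π (root1 π) α := by
  intro α _
  have hmem : ([] : TreeV) ∈ {b : TreeV | ancOf α (Sum.inl b)} := ancOf_nil α
  have hval : Set.indicator {b : TreeV | ancOf α (Sum.inl b)}
      (fun b => root1 π b * π b) [] = 1 := by
    rw [Set.indicator_of_mem hmem]
    rw [show root1 π [] = (π [])⁻¹ from if_pos rfl]
    exact ENNReal.inv_mul_cancel h0 ht
  calc (1 : ℝ≥0∞) = _ := hval.symm
    _ ≤ hardy1 π (root1 π) α := ENNReal.le_tsum _

lemma root1_energy (π : TreeV → ℝ≥0∞) (h0 : π [] ≠ 0) (ht : π [] ≠ ⊤) :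
    ∑' b, root1 π b ^ 2 * π b = (π [])⁻¹ := by
  rw [tsum_eq_single ([] : TreeV) (fun b hb => by simp [root1, if_neg hb])]
  rw [show root1 π [] = (π [])⁻¹ from if_pos rfl]
  rw [sq, mul_assoc, ENNReal.inv_mul_cancel h0 ht, mul_one]

/-- the d-variable root test function -/
noncomputable def rootd {d : ℕ} (π : VtxD d → ℝ≥0∞) : VtxD d → ℝ≥0∞ :=
  fun β => if β = (fun _ => []) then (π (fun _ => []))⁻¹ else 0

lemma rootd_adm {d : ℕ} (π : VtxD d → ℝ≥0∞) (h0 : π (fun _ => []) ≠ 0)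
    (ht : π (fun _ => []) ≠ ⊤) (E : Set (BarD d)) :
    ∀ α ∈ E, 1 ≤ hardy π (rootd π) α := by
  intro α _
  have hmem : (fun _ => ([] : TreeV)) ∈ {β : VtxD d | vleOf α β} := vleOf_root α
  have hval : Set.indicator {β : VtxD d | vleOf α β}
      (fun β => rootd π β * π β) (fun _ => []) = 1 := by
    rw [Set.indicator_of_mem hmem]
    rw [show rootd π (fun _ => []) = (π (fun _ => []))⁻¹ from if_pos rfl]
    exact ENNReal.inv_mul_cancel h0 ht
  calc (1 : ℝ≥0∞) = _ := hval.symm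
    _ ≤ hardy π (rootd π) α := ENNReal.le_tsum _

lemma rootd_energy {d : ℕ} (π : VtxD d → ℝ≥0∞) (h0 : π (fun _ => []) ≠ 0)
    (ht : π (fun _ => []) ≠ ⊤) :
    ∑' β, rootd π β ^ 2 * π β = (π (fun _ => []))⁻¹ := by
  rw [tsum_eq_single (fun _ => ([] : TreeV)) (fun β hβ => by simp [rootd, if_neg hβ])]
  rw [show rootd π (fun _ => []) = (π (fun _ => []))⁻¹ from if_pos rfl]
  rw [sq, mul_assoc, ENNReal.inv_mul_cancel h0 ht, mul_one]

lemma capac1_le_root (π : TreeV → ℝ≥0∞) (h0 : π [] ≠ 0) (ht : π [] ≠ ⊤) (E : Set TreeBar) :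
    capac1 π E ≤ (π [])⁻¹ :=
  le_trans (iInf₂_le (root1 π) (root1_adm π h0 ht E)) (root1_energy π h0 ht).le

lemma capac_le_root {d : ℕ} (π : VtxD d → ℝ≥0∞) (h0 : π (fun _ => []) ≠ 0)
    (ht : π (fun _ => []) ≠ ⊤) (E : Set (BarD d)) :
    capac π E ≤ (π (fun _ => []))⁻¹ :=
  le_trans (iInf₂_le (rootd π) (rootd_adm π h0 ht E)) (rootd_energy π h0 ht).le

lemma tsum_cons {d : ℕ} (F : VtxD (d+1) → ℝ≥0∞) :
    ∑' β, F β = ∑' a : TreeV, ∑' g : VtxD d, F (Fin.cons a g) := by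
  rw [← (Fin.consEquiv (fun _ : Fin (d+1) => TreeV)).tsum_eq F]
  calc ∑' c : TreeV × (Fin d → TreeV), F ((Fin.consEquiv fun _ => TreeV) c)
      = ∑' c : TreeV × (Fin d → TreeV), (fun a (g : VtxD d) => F (Fin.cons a g)) c.1 c.2 :=
        tsum_congr fun c => rfl
    _ = ∑' a : TreeV, ∑' g : VtxD d, F (Fin.cons a g) :=
        ENNReal.tsum_prod (f := fun a (g : VtxD d) => F (Fin.cons a g))

lemma tsum_cons_factor {d : ℕ} (u : TreeV → ℝ≥0∞) (v : VtxD d → ℝ≥0∞) :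
    ∑' β : VtxD (d+1), u (β 0) * v (Fin.tail β) = (∑' a, u a) * ∑' g, v g := by
  rw [tsum_cons (fun β : VtxD (d+1) => u (β 0) * v (Fin.tail β))]
  have h : ∀ (a : TreeV) (g : VtxD d),
      (fun β : VtxD (d+1) => u (β 0) * v (Fin.tail β)) (Fin.cons a g) = u a * v g := by
    intro a g
    simp only [Fin.cons_zero, Fin.tail_cons]
  calc ∑' (a : TreeV) (g : VtxD d),
        (fun β : VtxD (d+1) => u (β 0) * v (Fin.tail β)) (Fin.cons a g)
      = ∑' (a : TreeV) (g : VtxD d), u a * v g :=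
        tsum_congr fun a => tsum_congr fun g => h a g
    _ = ∑' a, u a * ∑' g, v g := tsum_congr fun a => ENNReal.tsum_mul_left
    _ = (∑' a, u a) * ∑' g, v g := ENNReal.tsum_mul_right

lemma vleOf_iff {d : ℕ} (α : BarD (d+1)) (β : VtxD (d+1)) :
    vleOf α β ↔ ancOf (α 0) (Sum.inl (β 0)) ∧ vleOf (Fin.tail α) (Fin.tail β) := by
  constructor
  · intro h; exact ⟨h 0, fun j => h j.succ⟩
  · rintro ⟨h0, h'⟩ i
    refine Fin.cases h0 (fun j => h' j) i

lemma prod_succ {d : ℕ} (πs : Fin (d+1) → TreeV → ℝ≥0∞) (β : VtxD (d+1)) :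
    ∏ j, πs j (β j) = πs 0 (β 0) * ∏ j : Fin d, πs j.succ (β j.succ) :=
  Fin.prod_univ_succ _

lemma mem_pi_succ {d : ℕ} (Es : Fin (d+1) → Set TreeBar) {α : BarD (d+1)}
    (h : α ∈ Set.univ.pi Es) :
    α 0 ∈ Es 0 ∧ Fin.tail α ∈ Set.univ.pi (fun j : Fin d => Es j.succ) :=
  ⟨h 0 trivial, fun j _ => h j.succ trivial⟩

lemma cons_mem_pi {d : ℕ} (Es : Fin (d+1) → Set TreeBar) {α0 : TreeBar} {α' : BarD d}
    (h0 : α0 ∈ Es 0) (h' : α' ∈ Set.univ.pi (fun j : Fin d => Es j.succ)) :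
    Fin.cons α0 α' ∈ Set.univ.pi Es := by
  intro j _
  refine Fin.cases ?_ ?_ j
  · rw [Fin.cons_zero]; exact h0
  · intro i; rw [Fin.cons_succ]; exact h' i trivial

end Statement2Aux

namespace Statement2Aux

open ENNReal MeasureTheory

lemma hardy_prod {d : ℕ} (πs : Fin (d+1) → TreeV → ℝ≥0∞) (f0 : TreeV → ℝ≥0∞)
    (f' : VtxD d → ℝ≥0∞) (α : BarD (d+1)) :
    hardy (fun β => ∏ j, πs j (β j)) (fun β => f0 (β 0) * f' (Fin.tail β)) α
      = hardy1 (πs 0) f0 (α 0)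
        * hardy (fun g : VtxD d => ∏ j, πs j.succ (g j)) f' (Fin.tail α) := by
  unfold hardy hardy1
  rw [← tsum_cons_factor
    (fun a => Set.indicator {b : TreeV | ancOf (α 0) (Sum.inl b)} (fun b => f0 b * πs 0 b) a)
    (fun g : VtxD d => Set.indicator {g : VtxD d | vleOf (Fin.tail α) g}
      (fun g => f' g * ∏ j, πs j.succ (g j)) g)]
  refine tsum_congr fun β => ?_
  beta_reduce
  by_cases h0 : ancOf (α 0) (Sum.inl (β 0))
  · by_cases h' : vleOf (Fin.tail α) (Fin.tail β)
    · rw [Set.indicator_of_mem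
          (show β ∈ {β : VtxD (d+1) | vleOf α β} from (vleOf_iff α β).2 ⟨h0, h'⟩),
        Set.indicator_of_mem (show β 0 ∈ {b : TreeV | ancOf (α 0) (Sum.inl b)} from h0),
        Set.indicator_of_mem (show Fin.tail β ∈ {g : VtxD d | vleOf (Fin.tail α) g} from h'),
        prod_succ]
      simp only [Fin.tail]
      ring
    · rw [Set.indicator_of_notMem (show β ∉ {β : VtxD (d+1) | vleOf α β} from
          fun hm => h' ((vleOf_iff α β).1 hm).2),
        Set.indicator_of_notMem
          (show Fin.tail β ∉ {g : VtxD d | vleOf (Fin.tail α) g} from h'), mul_zero]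
  · rw [Set.indicator_of_notMem (show β ∉ {β : VtxD (d+1) | vleOf α β} from
        fun hm => h0 ((vleOf_iff α β).1 hm).1),
      Set.indicator_of_notMem
        (show β 0 ∉ {b : TreeV | ancOf (α 0) (Sum.inl b)} from h0), zero_mul]

lemma energy_prod {d : ℕ} (πs : Fin (d+1) → TreeV → ℝ≥0∞) (f0 : TreeV → ℝ≥0∞)
    (f' : VtxD d → ℝ≥0∞) :
    ∑' β : VtxD (d+1), (f0 (β 0) * f' (Fin.tail β)) ^ 2 * ∏ j, πs j (β j)
      = (∑' b, f0 b ^ 2 * πs 0 b) * ∑' g : VtxD d, f' g ^ 2 * ∏ j, πs j.succ (g j) := by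
  rw [← tsum_cons_factor (fun b => f0 b ^ 2 * πs 0 b)
    (fun g : VtxD d => f' g ^ 2 * ∏ j, πs j.succ (g j))]
  refine tsum_congr fun β => ?_
  beta_reduce
  rw [prod_succ]
  simp only [Fin.tail]
  ring

lemma hardy_cons_pt {d : ℕ} (πs : Fin (d+1) → TreeV → ℝ≥0∞) (f : VtxD (d+1) → ℝ≥0∞)
    (α0 : TreeBar) (α' : BarD d) :
    hardy (fun β => ∏ j, πs j (β j)) f (Fin.cons α0 α')
      = hardy1 (πs 0) (fun a => ∑' g : VtxD d,
          Set.indicator {g : VtxD d | vleOf α' g}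
            (fun g => f (Fin.cons a g) * ∏ j, πs j.succ (g j)) g) α0 := by
  unfold hardy hardy1
  rw [tsum_cons]
  refine tsum_congr fun a => ?_
  beta_reduce
  by_cases h0 : ancOf α0 (Sum.inl a)
  · rw [Set.indicator_of_mem (show a ∈ {b : TreeV | ancOf α0 (Sum.inl b)} from h0)]
    beta_reduce
    rw [← ENNReal.tsum_mul_right]
    refine tsum_congr fun g => ?_
    by_cases h' : vleOf α' g
    · have hm : vleOf (Fin.cons α0 α') (Fin.cons a g) := by
        refine (vleOf_iff _ _).2 ⟨?_, ?_⟩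
        · simpa only [Fin.cons_zero] using h0
        · simpa only [Fin.tail_cons] using h'
      rw [Set.indicator_of_mem
          (show Fin.cons a g ∈ {β : VtxD (d+1) | vleOf (Fin.cons α0 α') β} from hm),
        Set.indicator_of_mem (show g ∈ {g : VtxD d | vleOf α' g} from h')]
      beta_reduce
      rw [prod_succ]
      simp only [Fin.cons_zero, Fin.cons_succ]
      ring
    · rw [Set.indicator_of_notMem
          (show Fin.cons a g ∉ {β : VtxD (d+1) | vleOf (Fin.cons α0 α') β} from
            fun hm => h' (by simpa only [Fin.tail_cons] using ((vleOf_iff _ _).1 hm).2)),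
        Set.indicator_of_notMem (show g ∉ {g : VtxD d | vleOf α' g} from h'), zero_mul]
  · rw [Set.indicator_of_notMem (show a ∉ {b : TreeV | ancOf α0 (Sum.inl b)} from h0)]
    refine ENNReal.tsum_eq_zero.2 fun g => ?_
    refine Set.indicator_of_notMem
      (show Fin.cons a g ∉ {β : VtxD (d+1) | vleOf (Fin.cons α0 α') β} from
        fun hm => h0 (by simpa only [Fin.cons_zero] using ((vleOf_iff _ _).1 hm).1)) _

lemma hardy_smul {d : ℕ} (π : VtxD d → ℝ≥0∞) (c : ℝ≥0∞) (F : VtxD d → ℝ≥0∞) (α : BarD d) :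
    hardy π (fun g => c * F g) α = c * hardy π F α := by
  unfold hardy
  rw [← ENNReal.tsum_mul_left]
  refine tsum_congr fun g => ?_
  by_cases h : g ∈ {g : VtxD d | vleOf α g}
  · rw [Set.indicator_of_mem h, Set.indicator_of_mem h]
    beta_reduce
    ring
  · rw [Set.indicator_of_notMem h, Set.indicator_of_notMem h, mul_zero]

lemma energyF {d : ℕ} (πs : Fin (d+1) → TreeV → ℝ≥0∞) (f : VtxD (d+1) → ℝ≥0∞) :
    ∑' g : VtxD d, (∑' a, f (Fin.cons a g) ^ 2 * πs 0 a) * ∏ j, πs j.succ (g j)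
      = ∑' β : VtxD (d+1), f β ^ 2 * ∏ j, πs j (β j) := by
  rw [tsum_cons (fun β : VtxD (d+1) => f β ^ 2 * ∏ j, πs j (β j))]
  rw [ENNReal.tsum_comm (f := fun a (g : VtxD d) =>
    (fun β : VtxD (d+1) => f β ^ 2 * ∏ j, πs j (β j)) (Fin.cons a g))]
  refine tsum_congr fun g => ?_
  rw [← ENNReal.tsum_mul_right]
  refine tsum_congr fun a => ?_
  beta_reduce
  rw [prod_succ]
  simp only [Fin.cons_zero, Fin.cons_succ]
  ring

end Statement2Aux

namespace Statement2Aux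

open ENNReal MeasureTheory

lemma capac_zero (πs : Fin 0 → TreeV → ℝ≥0∞) (Es : Fin 0 → Set TreeBar) :
    capac (fun β : VtxD 0 => ∏ j, πs j (β j)) (Set.univ.pi Es) = 1 := by
  have hπ1 : ∀ β : VtxD 0, (∏ j, πs j (β j)) = 1 := fun β => by simp
  have hval : ∀ (f : VtxD 0 → ℝ≥0∞) (α : BarD 0),
      hardy (fun β : VtxD 0 => ∏ j, πs j (β j)) f α = f default := by
    intro f α
    unfold hardy
    rw [tsum_eq_single default (fun b hb => absurd (Subsingleton.elim b default) hb)]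
    rw [Set.indicator_of_mem (show (default : VtxD 0) ∈ {β : VtxD 0 | vleOf α β} from
      fun i => i.elim0)]
    beta_reduce
    rw [hπ1, mul_one]
  apply le_antisymm
  · refine le_trans (iInf₂_le (fun _ => 1) ?_) ?_
    · intro α _
      rw [hval]
    · rw [tsum_eq_single default (fun b hb => absurd (Subsingleton.elim b default) hb)]
      beta_reduce
      rw [hπ1, mul_one, one_pow]
  · refine le_iInf₂ fun f hf => ?_
    have h1 : 1 ≤ f default := by
      have := hf default (fun i _ => i.elim0)
      rwa [hval] at this
    refine le_trans ?_ (ENNReal.le_tsum default)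
    beta_reduce
    rw [hπ1, mul_one, sq]
    calc (1:ℝ≥0∞) = 1 * 1 := (one_mul 1).symm
      _ ≤ f default * f default := mul_le_mul' h1 h1

lemma capac_succ (d : ℕ) (πs : Fin (d+1) → TreeV → ℝ≥0∞)
    (hπ : ∀ j b, 0 < πs j b ∧ πs j b ≠ ⊤)
    (Es : Fin (d+1) → Set TreeBar) :
    capac (fun β : VtxD (d+1) => ∏ j, πs j (β j)) (Set.univ.pi Es)
      = capac1 (πs 0) (Es 0)
        * capac (fun g : VtxD d => ∏ j, πs j.succ (g j)) (Set.univ.pi fun j => Es j.succ) := by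
  set π : VtxD (d+1) → ℝ≥0∞ := fun β => ∏ j, πs j (β j) with hπdef
  set π' : VtxD d → ℝ≥0∞ := fun g => ∏ j, πs j.succ (g j) with hπ'def
  set E : Set (BarD (d+1)) := Set.univ.pi Es with hEdef
  set E' : Set (BarD d) := Set.univ.pi (fun j => Es j.succ) with hE'def
  -- positivity/finiteness facts
  have h10 : πs 0 [] ≠ 0 := (hπ 0 []).1.ne'
  have h1t : πs 0 [] ≠ ⊤ := (hπ 0 []).2
  have hr0 : π' (fun _ => []) ≠ 0 := by
    rw [hπ'def]
    beta_reduce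
    rw [Finset.prod_ne_zero_iff]
    exact fun j _ => (hπ j.succ []).1.ne'
  have hrt : π' (fun _ => []) ≠ ⊤ := by
    rw [hπ'def]
    beta_reduce
    exact (ENNReal.prod_lt_top fun j _ => (hπ j.succ []).2.lt_top).ne
  have hcap1_ne_top : capac1 (πs 0) (Es 0) ≠ ⊤ :=
    ((capac1_le_root (πs 0) h10 h1t (Es 0)).trans_lt
      (ENNReal.inv_lt_top.2 (hπ 0 []).1)).ne
  have hcapd_ne_top : capac π' E' ≠ ⊤ :=
    ((capac_le_root π' hr0 hrt E').trans_lt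
      (ENNReal.inv_lt_top.2 (pos_iff_ne_zero.2 hr0))).ne
  apply le_antisymm
  · -- upper bound via product test functions
    have h1 : capac1 (πs 0) (Es 0)
        = ⨅ x : {f0 : TreeV → ℝ≥0∞ // ∀ α ∈ Es 0, 1 ≤ hardy1 (πs 0) f0 α},
            ∑' b, (x : _).1 b ^ 2 * πs 0 b := iInf_subtype'
    have hd1 : capac π' E'
        = ⨅ x : {f' : VtxD d → ℝ≥0∞ // ∀ α ∈ E', 1 ≤ hardy π' f' α},
            ∑' g, (x : _).1 g ^ 2 * π' g := iInf_subtype'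
    rw [h1, hd1]
    refine ENNReal.le_iInf_mul_iInf ?_ ?_ ?_
    · refine ⟨⟨root1 (πs 0), root1_adm (πs 0) h10 h1t (Es 0)⟩, ?_⟩
      rw [root1_energy (πs 0) h10 h1t]
      exact ENNReal.inv_ne_top.2 h10
    · refine ⟨⟨rootd π', rootd_adm π' hr0 hrt E'⟩, ?_⟩
      rw [rootd_energy π' hr0 hrt]
      exact ENNReal.inv_ne_top.2 hr0
    · rintro ⟨f0, hf0⟩ ⟨f', hf'⟩
      have hadm : ∀ α ∈ E, 1 ≤ hardy π (fun β => f0 (β 0) * f' (Fin.tail β)) α := by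
        intro α hα
        rw [hπdef, hardy_prod]
        obtain ⟨h0, h'⟩ := mem_pi_succ Es hα
        calc (1:ℝ≥0∞) = 1 * 1 := (one_mul 1).symm
          _ ≤ _ := mul_le_mul' (hf0 _ h0) (hf' _ h')
      calc capac π E ≤ ∑' β, (f0 (β 0) * f' (Fin.tail β)) ^ 2 * π β := iInf₂_le _ hadm
        _ = _ := by rw [hπdef]; exact energy_prod πs f0 f'
  · -- lower bound via Minkowski slicing
    refine le_iInf₂ fun f hf => ?_
    by_cases hc1 : capac1 (πs 0) (Es 0) = 0
    · rw [hc1, zero_mul]; exact zero_le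
    by_cases hcd : capac π' E' = 0
    · rw [hcd, mul_zero]; exact zero_le
    set F : VtxD d → ℝ≥0∞ := fun g => esqrt (∑' a, f (Fin.cons a g) ^ 2 * πs 0 a) with hF
    have hFadm : ∀ α' ∈ E', esqrt (capac1 (πs 0) (Es 0)) ≤ hardy π' F α' := by
      intro α' hα'
      set gfn : TreeV → ℝ≥0∞ := fun a => ∑' g : VtxD d,
        Set.indicator {g : VtxD d | vleOf α' g}
          (fun g => f (Fin.cons a g) * π' g) g with hgfn
      have hadm1 : ∀ α0 ∈ Es 0, 1 ≤ hardy1 (πs 0) gfn α0 := by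
        intro α0 h0
        rw [hgfn, hπ'def, ← hardy_cons_pt πs f α0 α']
        exact hf _ (cons_mem_pi Es h0 hα')
      have h1 : capac1 (πs 0) (Es 0) ≤ ∑' a, gfn a ^ 2 * πs 0 a := iInf₂_le gfn hadm1
      have hrw : ∀ a, gfn a = ∑' g : VtxD d,
          Set.indicator {g : VtxD d | vleOf α' g} π' g * f (Fin.cons a g) := by
        intro a
        rw [hgfn]
        refine tsum_congr fun g => ?_
        by_cases h' : g ∈ {g : VtxD d | vleOf α' g}
        · rw [Set.indicator_of_mem h', Set.indicator_of_mem h', mul_comm]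
        · rw [Set.indicator_of_notMem h', Set.indicator_of_notMem h', zero_mul]
      have h2 : esqrt (∑' a, gfn a ^ 2 * πs 0 a) ≤ hardy π' F α' := by
        calc esqrt (∑' a, gfn a ^ 2 * πs 0 a)
            = esqrt (∑' a, (∑' g : VtxD d,
                Set.indicator {g : VtxD d | vleOf α' g} π' g * f (Fin.cons a g)) ^ 2
                  * πs 0 a) := by
              refine congrArg esqrt (tsum_congr fun a => ?_)
              rw [hrw a]
          _ ≤ ∑' g : VtxD d, esqrt (∑' a,
                (Set.indicator {g : VtxD d | vleOf α' g} π' g * f (Fin.cons a g)) ^ 2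
                  * πs 0 a) :=
              minkowski (fun a (g : VtxD d) =>
                Set.indicator {g : VtxD d | vleOf α' g} π' g * f (Fin.cons a g)) (πs 0)
          _ = hardy π' F α' := by
              unfold hardy
              refine tsum_congr fun g => ?_
              by_cases h' : g ∈ {g : VtxD d | vleOf α' g}
              · rw [Set.indicator_of_mem h', Set.indicator_of_mem h']
                beta_reduce
                have : ∀ a, (π' g * f (Fin.cons a g)) ^ 2 * πs 0 a
                    = π' g ^ 2 * (f (Fin.cons a g) ^ 2 * πs 0 a) := fun a => by ring
                rw [tsum_congr this, ENNReal.tsum_mul_left, esqrt_mul, sq_esqrt, mul_comm]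
              · rw [Set.indicator_of_notMem h', Set.indicator_of_notMem h']
                have : ∀ a, ((0:ℝ≥0∞) * f (Fin.cons a g)) ^ 2 * πs 0 a = 0 := fun a => by
                  rw [zero_mul]; simp
                rw [tsum_congr this, tsum_zero]
                simp [esqrt]
      exact le_trans (esqrt_mono h1) h2
    set s : ℝ≥0∞ := esqrt (capac1 (πs 0) (Es 0)) with hs
    have hs0 : s ≠ 0 := esqrt_ne_zero hc1
    have hst : s ≠ ⊤ := esqrt_ne_top hcap1_ne_top
    have hadm' : ∀ α' ∈ E', 1 ≤ hardy π' (fun g => s⁻¹ * F g) α' := by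
      intro α' h
      rw [hardy_smul]
      calc (1:ℝ≥0∞) = s⁻¹ * s := (ENNReal.inv_mul_cancel hs0 hst).symm
        _ ≤ s⁻¹ * hardy π' F α' := mul_le_mul_right (hFadm α' h) _
    have hcd_le : capac π' E' ≤ ∑' g, (s⁻¹ * F g) ^ 2 * π' g := iInf₂_le _ hadm'
    have henergy : ∑' g, (s⁻¹ * F g) ^ 2 * π' g = s⁻¹ ^ 2 * ∑' β, f β ^ 2 * π β := by
      have hpt : ∀ g, (s⁻¹ * F g) ^ 2 * π' g = s⁻¹ ^ 2 * (F g ^ 2 * π' g) := fun g => by ring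
      rw [tsum_congr hpt, ENNReal.tsum_mul_left]
      congr 1
      have hF2 : ∀ g, F g ^ 2 * π' g
          = (∑' a, f (Fin.cons a g) ^ 2 * πs 0 a) * π' g := fun g => by
        rw [hF]
        beta_reduce
        rw [esqrt_sq]
      rw [tsum_congr hF2, hπ'def, hπdef]
      exact energyF πs f
    have hmain : capac1 (πs 0) (Es 0) * capac π' E'
        ≤ capac1 (πs 0) (Es 0) * (s⁻¹ ^ 2 * ∑' β, f β ^ 2 * π β) :=
      mul_le_mul_right (hcd_le.trans_eq henergy) _
    have hss : capac1 (πs 0) (Es 0) * s⁻¹ ^ 2 = 1 := by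
      have h2 : s⁻¹ ^ 2 = (capac1 (πs 0) (Es 0))⁻¹ := by
        rw [← ENNReal.inv_pow, hs, esqrt_sq]
      rw [h2]
      exact ENNReal.mul_inv_cancel hc1 hcap1_ne_top
    calc capac1 (πs 0) (Es 0) * capac π' E'
        ≤ capac1 (πs 0) (Es 0) * (s⁻¹ ^ 2 * ∑' β, f β ^ 2 * π β) := hmain
      _ = (capac1 (πs 0) (Es 0) * s⁻¹ ^ 2) * ∑' β, f β ^ 2 * π β := (mul_assoc _ _ _).symm
      _ = ∑' β, f β ^ 2 * π β := by rw [hss, one_mul]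

end Statement2Aux

/-- for a product weight and a product set `E = E_1 × ⋯ × E_d` of Borel sets,
`cap_π E = ∏_j cap_{π_j} E_j`. -/
theorem statement2 (d : ℕ) (πs : Fin d → TreeV → ℝ≥0∞)
    (hπ : ∀ j b, 0 < πs j b ∧ πs j b ≠ ⊤)
    (Es : Fin d → Set TreeBar) (hEs : ∀ j, MeasurableSet (Es j)) :
    capac (fun β => ∏ j, πs j (β j)) (Set.univ.pi Es) = ∏ j, capac1 (πs j) (Es j) := by
  induction d with
  | zero =>
      rw [Statement2Aux.capac_zero πs Es]
      simp
  | succ n ih =>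
      rw [Statement2Aux.capac_succ n πs hπ Es, Fin.prod_univ_succ]
      congr 1
      exact ih (fun j => πs j.succ) (fun j b => hπ j.succ b) (fun j => Es j.succ)
        (fun j => hEs j.succ)
end
end

section
/- Let π be a weight on T^d, let E ⊆ T̄^d be Borel, and let μ be a nonnegative Borel measure on T̄^d with finite energy E_π[μ] < ∞ such that V_π^μ(α) ≤ 1 quasi-everywhere on E (i.e. at every point of E outside a set of π-capacity zero). Then cap_π E ≥ μ(E). -/
open MeasureTheory ENNReal Set
open scoped Classical

noncomputable section

/-! ### Auxiliary lemmas for Statement 3 -/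

instance : MeasurableSingletonClass TreeV := ⟨fun _ => trivial⟩

lemma measurableSet_succ1 (b : TreeV) : MeasurableSet (succ1 b) := by
  rw [measurableSet_sum_iff]
  refine ⟨trivial, ?_⟩
  have : Sum.inr ⁻¹' succ1 b = ⋂ i : Fin b.length, {ω : TreeB | b.get i = ω i} := by
    ext ω
    simp only [Set.mem_preimage, Set.mem_iInter, Set.mem_setOf_eq]
    rfl
  rw [this]
  refine MeasurableSet.iInter fun i => ?_
  have h1 : {ω : TreeB | b.get i = ω i} = (fun ω : TreeB => ω i) ⁻¹' {b.get i} := by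
    ext ω; simp [eq_comm]
  rw [h1]
  exact measurable_pi_apply _ (measurableSet_singleton _)

lemma measurableSet_succSet {d : ℕ} (β : VtxD d) : MeasurableSet (succSet β) := by
  have : succSet β = ⋂ i, (fun γ : BarD d => γ i) ⁻¹' succ1 (β i) := by
    ext γ
    simp only [Set.mem_iInter, Set.mem_preimage]
    rfl
  rw [this]
  exact MeasurableSet.iInter fun i => measurable_pi_apply i (measurableSet_succ1 (β i))

lemma hardy_eq {d : ℕ} (π f : VtxD d → ℝ≥0∞) (γ : BarD d) :
    hardy π f γ = ∑' β : VtxD d, (succSet β).indicator (fun _ => f β * π β) γ := by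
  refine tsum_congr fun β => ?_
  rw [Set.indicator_apply, Set.indicator_apply]
  exact if_congr Iff.rfl rfl rfl

lemma potential_eq {d : ℕ} (π : VtxD d → ℝ≥0∞) (μ : Measure (BarD d)) (γ : BarD d) :
    potential π μ γ
      = ∑' β : VtxD d, (succSet β).indicator (fun _ => μ (succSet β) * π β) γ := by
  refine tsum_congr fun β => ?_
  rw [Set.indicator_apply, Set.indicator_apply]
  exact if_congr Iff.rfl rfl rfl

lemma measurable_sumInd {d : ℕ} (g : VtxD d → ℝ≥0∞) :
    Measurable fun γ : BarD d => ∑' β : VtxD d, (succSet β).indicator (fun _ => g β) γ :=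
  Measurable.ennreal_tsum fun β => measurable_const.indicator (measurableSet_succSet β)

lemma setLintegral_sumInd {d : ℕ} (lam : Measure (BarD d)) {A : Set (BarD d)}
    (hA : MeasurableSet A) (g : VtxD d → ℝ≥0∞) :
    ∫⁻ γ in A, (∑' β : VtxD d, (succSet β).indicator (fun _ => g β) γ) ∂lam
      = ∑' β : VtxD d, g β * lam (succSet β ∩ A) := by
  rw [lintegral_tsum fun β =>
    (measurable_const.indicator (measurableSet_succSet β)).aemeasurable]
  refine tsum_congr fun β => ?_
  rw [setLIntegral_indicator (measurableSet_succSet β), setLIntegral_const]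

lemma sq_half {x : ℝ≥0∞} : (x ^ (1/2 : ℝ)) ^ (2 : ℝ) = x := by
  rw [← ENNReal.rpow_mul]
  norm_num

lemma half_sq {x : ℝ≥0∞} : (x ^ (2 : ℝ)) ^ (1/2 : ℝ) = x := by
  rw [← ENNReal.rpow_mul]
  norm_num

lemma half_mul_self {x : ℝ≥0∞} : x ^ (1/2 : ℝ) * x ^ (1/2 : ℝ) = x := by
  rw [← ENNReal.rpow_add_of_nonneg _ _ (by norm_num) (by norm_num)]
  norm_num

/-- Discrete Cauchy–Schwarz inequality in `ℝ≥0∞` with weight `π`. -/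
lemma tsum_cauchy_schwarz {ι : Type*} [Countable ι] (π g h : ι → ℝ≥0∞) :
    ∑' β, g β * h β * π β
      ≤ (∑' β, g β ^ 2 * π β) ^ (1/2 : ℝ) * (∑' β, h β ^ 2 * π β) ^ (1/2 : ℝ) := by
  letI : MeasurableSpace ι := ⊤
  haveI : MeasurableSingletonClass ι := ⟨fun _ => trivial⟩
  have hconj : Real.HolderConjugate 2 2 :=
    (Real.holderConjugate_iff_eq_conjExponent one_lt_two).mpr (by norm_num)
  have key := ENNReal.lintegral_mul_le_Lp_mul_Lq (Measure.count : Measure ι) hconj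
      (f := fun β => g β * π β ^ (1/2 : ℝ)) (g := fun β => h β * π β ^ (1/2 : ℝ))
      (measurable_of_countable _).aemeasurable (measurable_of_countable _).aemeasurable
  simp only [Pi.mul_apply, lintegral_count] at key
  have hsq : ∀ (a b : ι → ℝ≥0∞) (β : ι),
      (a β * π β ^ (1/2 : ℝ)) ^ (2 : ℝ) = a β ^ 2 * π β := by
    intro a b β
    rw [ENNReal.mul_rpow_of_nonneg _ _ (by norm_num : (0:ℝ) ≤ 2), sq_half,
      ENNReal.rpow_two]
  calc ∑' β, g β * h β * π β
      = ∑' β, (g β * π β ^ (1/2 : ℝ)) * (h β * π β ^ (1/2 : ℝ)) := by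
        refine tsum_congr fun β => ?_
        rw [mul_mul_mul_comm, half_mul_self]
    _ ≤ (∑' β, (g β * π β ^ (1/2 : ℝ)) ^ (2:ℝ)) ^ (1/2 : ℝ)
        * (∑' β, (h β * π β ^ (1/2 : ℝ)) ^ (2:ℝ)) ^ (1/2 : ℝ) := key
    _ = (∑' β, g β ^ 2 * π β) ^ (1/2 : ℝ) * (∑' β, h β ^ 2 * π β) ^ (1/2 : ℝ) := by
        rw [tsum_congr (hsq g h), tsum_congr (hsq h g)]

/-- The key estimate: if `1 ≤ If` on `A`, then
`λ(A) ≤ (∑ f²π)^{1/2} * (energy λ)^{1/2}`. -/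
lemma meas_le_of_adm {d : ℕ} (π : VtxD d → ℝ≥0∞) (lam : Measure (BarD d))
    (f : VtxD d → ℝ≥0∞) (A : Set (BarD d)) (hadm : ∀ α ∈ A, 1 ≤ hardy π f α) :
    lam A ≤ (∑' β : VtxD d, f β ^ 2 * π β) ^ (1/2 : ℝ) * (energy π lam) ^ (1/2 : ℝ) := by
  set S : Set (BarD d) := {γ | 1 ≤ hardy π f γ} with hS
  have hmeas : Measurable (hardy π f) := by
    have : hardy π f = fun γ => ∑' β : VtxD d,
        (succSet β).indicator (fun _ => f β * π β) γ := funext (hardy_eq π f)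
    rw [this]; exact measurable_sumInd _
  have hSmeas : MeasurableSet S := measurableSet_le measurable_const hmeas
  have h1 : lam A ≤ lam S := measure_mono fun α hα => hadm α hα
  have h2 : lam S ≤ ∫⁻ γ, hardy π f γ ∂lam := by
    calc lam S = ∫⁻ _ in S, 1 ∂lam := (setLIntegral_one S).symm
      _ ≤ ∫⁻ γ in S, hardy π f γ ∂lam := setLIntegral_mono hmeas fun γ hγ => hγ
      _ ≤ ∫⁻ γ in Set.univ, hardy π f γ ∂lam := lintegral_mono_set (Set.subset_univ S)
      _ = ∫⁻ γ, hardy π f γ ∂lam := by rw [Measure.restrict_univ]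
  have h3 : ∫⁻ γ, hardy π f γ ∂lam = ∑' β : VtxD d, f β * lam (succSet β) * π β := by
    have h := setLintegral_sumInd lam MeasurableSet.univ (fun β => f β * π β)
    rw [Measure.restrict_univ] at h
    rw [show hardy π f = fun γ => ∑' β : VtxD d,
        (succSet β).indicator (fun _ => f β * π β) γ from funext (hardy_eq π f), h]
    refine tsum_congr fun β => ?_
    rw [Set.inter_univ]
    ring
  have h4 : ∑' β : VtxD d, f β * lam (succSet β) * π β
      ≤ (∑' β : VtxD d, f β ^ 2 * π β) ^ (1/2 : ℝ)
        * (∑' β : VtxD d, lam (succSet β) ^ 2 * π β) ^ (1/2 : ℝ) :=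
    tsum_cauchy_schwarz π f (fun β => lam (succSet β))
  exact h1.trans (h2.trans (h3.le.trans h4))

/-- if `μ` has finite energy and `V_π^μ ≤ 1` quasi-everywhere on the Borel set
`E`, then `cap_π E ≥ μ(E)`. -/
theorem statement3 (d : ℕ) (π : VtxD d → ℝ≥0∞) (hπ : ∀ β, 0 < π β ∧ π β ≠ ⊤)
    (E : Set (BarD d)) (hE : MeasurableSet E)
    (μ : Measure (BarD d)) (hfin : energy π μ ≠ ⊤)
    (hqe : ∃ N : Set (BarD d), capac π N = 0 ∧ ∀ α ∈ E \ N, potential π μ α ≤ 1) :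
    μ E ≤ capac π E := by
  obtain ⟨N, hN0, hNle⟩ := hqe
  -- the total mass of μ is finite
  have hroot : succSet (fun _ => ([] : TreeV) : VtxD d) = Set.univ := by
    ext γ
    simp only [Set.mem_univ, iff_true]
    intro i
    cases h : γ i with
    | inl a => exact List.nil_prefix
    | inr ω => exact fun j => absurd j.2 (by simp)
  have hμuniv : μ Set.univ ≠ ⊤ := by
    intro htop
    apply hfin
    refine top_le_iff.mp ?_
    calc (⊤ : ℝ≥0∞) = μ (succSet (fun _ => ([] : TreeV) : VtxD d)) ^ 2
          * π (fun _ => ([] : TreeV)) := by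
          rw [hroot, htop]
          rw [ENNReal.top_pow (by norm_num : 2 ≠ 0), ENNReal.top_mul (hπ _).1.ne']
      _ ≤ energy π μ := ENNReal.le_tsum _
  -- μ does not charge the capacity-zero set N
  have hadm_exists : ∀ δ : ℝ≥0∞, 0 < δ →
      ∃ f : VtxD d → ℝ≥0∞, (∀ α ∈ N, 1 ≤ hardy π f α)
        ∧ ∑' β : VtxD d, f β ^ 2 * π β < δ := by
    intro δ hδ
    have hlt : capac π N < δ := by rw [hN0]; exact hδ
    rw [capac, iInf_lt_iff] at hlt
    obtain ⟨f, hf⟩ := hlt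
    rw [iInf_lt_iff] at hf
    obtain ⟨hadm, hsum⟩ := hf
    exact ⟨f, hadm, hsum⟩
  set C : ℝ≥0∞ := (energy π μ) ^ (1/2 : ℝ) with hC
  have hCtop : C ≠ ⊤ := (ENNReal.rpow_lt_top_of_nonneg (by norm_num) hfin).ne
  have hμN : μ N = 0 := by
    by_contra hne
    have hNtop : μ N ≠ ⊤ :=
      ((measure_mono (Set.subset_univ N)).trans_lt hμuniv.lt_top).ne
    by_cases hC0 : C = 0
    · obtain ⟨f, hadm, _⟩ := hadm_exists 1 zero_lt_one
      have := meas_le_of_adm π μ f N hadm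
      rw [← hC, hC0, mul_zero] at this
      exact hne (le_antisymm this zero_le)
    · set x : ℝ≥0∞ := μ N / (2 * C) with hx
      have h2C0 : (2 : ℝ≥0∞) * C ≠ 0 := by
        simp [hC0]
      have h2Ctop : (2 : ℝ≥0∞) * C ≠ ⊤ := ENNReal.mul_ne_top (by norm_num) hCtop
      have hx0 : x ≠ 0 := by
        rw [hx]
        exact (ENNReal.div_pos hne h2Ctop).ne'
      obtain ⟨f, hadm, hsum⟩ := hadm_exists (x ^ (2 : ℝ))
        (ENNReal.rpow_pos (pos_iff_ne_zero.mpr hx0) (by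
          rw [hx]
          exact (ENNReal.div_lt_top hNtop h2C0).ne))
      have hb := meas_le_of_adm π μ f N hadm
      have hle2 : (∑' β : VtxD d, f β ^ 2 * π β) ^ (1/2 : ℝ) * C
          ≤ (x ^ (2:ℝ)) ^ (1/2 : ℝ) * C :=
        mul_le_mul_left (ENNReal.rpow_le_rpow hsum.le (by norm_num)) C
      have hxC : (x ^ (2:ℝ)) ^ (1/2 : ℝ) * C = μ N * 2⁻¹ := by
        rw [half_sq, hx, div_eq_mul_inv,
          ENNReal.mul_inv (Or.inl (by norm_num)) (Or.inl (by norm_num)),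
          mul_assoc, mul_assoc, ENNReal.inv_mul_cancel hC0 hCtop, mul_one]
      have : μ N ≤ μ N * 2⁻¹ := hb.trans (hle2.trans_eq hxC)
      have hhalf : μ N * 2⁻¹ < μ N := by
        rw [← div_eq_mul_inv]
        exact ENNReal.half_lt_self hne hNtop
      exact absurd (this.trans_lt hhalf) (lt_irrefl _)
  -- the restricted measure and its energy
  set ν : Measure (BarD d) := μ.restrict E with hν
  have hνE : ν E = μ E := by rw [hν, Measure.restrict_apply hE, Set.inter_self]
  have hμE_top : μ E ≠ ⊤ := ((measure_mono (Set.subset_univ E)).trans_lt hμuniv.lt_top).ne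
  -- energy of ν is at most μ E
  have henergy : energy π ν ≤ μ E := by
    set N' := toMeasurable μ N with hN'
    have hNsub : N ⊆ N' := subset_toMeasurable μ N
    have hN'0 : μ N' = 0 := by rw [hN', measure_toMeasurable]; exact hμN
    have hN'meas : MeasurableSet N' := measurableSet_toMeasurable μ N
    have hVmeas : Measurable (potential π μ) := by
      rw [show potential π μ = fun γ => ∑' β : VtxD d,
          (succSet β).indicator (fun _ => μ (succSet β) * π β) γ from
        funext (potential_eq π μ)]
      exact measurable_sumInd _
    calc energy π ν
        = ∑' β : VtxD d, ν (succSet β) ^ 2 * π β := rfl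
      _ ≤ ∑' β : VtxD d, (μ (succSet β) * π β) * ν (succSet β) := by
          refine ENNReal.tsum_le_tsum fun β => ?_
          have hle : ν (succSet β) ≤ μ (succSet β) := by
            rw [hν, Measure.restrict_apply (measurableSet_succSet β)]
            exact measure_mono Set.inter_subset_left
          calc ν (succSet β) ^ 2 * π β
              = ν (succSet β) * ν (succSet β) * π β := by rw [sq]
            _ ≤ μ (succSet β) * ν (succSet β) * π β :=
                mul_le_mul_left (mul_le_mul_left hle _) _
            _ = (μ (succSet β) * π β) * ν (succSet β) := by ring
      _ = ∫⁻ γ in Set.univ, potential π μ γ ∂ν := by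
          rw [show potential π μ = fun γ => ∑' β : VtxD d,
              (succSet β).indicator (fun _ => μ (succSet β) * π β) γ from
            funext (potential_eq π μ)]
          rw [setLintegral_sumInd ν MeasurableSet.univ]
          exact tsum_congr fun β => by rw [Set.inter_univ]
      _ = ∫⁻ γ in E, potential π μ γ ∂μ := by
          rw [Measure.restrict_univ]
      _ ≤ ∫⁻ γ in (E \ N') ∪ (E ∩ N'), potential π μ γ ∂μ := by
          refine lintegral_mono_set fun γ hγ => ?_
          by_cases hn : γ ∈ N'
          · exact Or.inr ⟨hγ, hn⟩
          · exact Or.inl ⟨hγ, hn⟩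
      _ ≤ (∫⁻ γ in E \ N', potential π μ γ ∂μ)
            + ∫⁻ γ in E ∩ N', potential π μ γ ∂μ := lintegral_union_le _ _ _
      _ ≤ μ E + 0 := by
          refine add_le_add ?_ ?_
          · refine (setLIntegral_le_meas (hE.diff hN'meas)
              (t := E \ N') (fun a ha _ => ?_) (fun a ha hna => absurd ha hna)).trans
              (measure_mono Set.diff_subset)
            exact hNle a ⟨ha.1, fun hn => ha.2 (hNsub hn)⟩
          · refine le_of_eq ?_
            refine setLIntegral_measure_zero _ _ ?_
            exact measure_mono_null Set.inter_subset_right hN'0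
      _ = μ E := add_zero _
  -- conclude for every admissible f
  refine le_iInf fun f => le_iInf fun hadm => ?_
  set A : ℝ≥0∞ := ∑' β : VtxD d, f β ^ 2 * π β with hA
  have hb : μ E ≤ A ^ (1/2 : ℝ) * (energy π ν) ^ (1/2 : ℝ) := by
    rw [← hνE]
    exact meas_le_of_adm π ν f E hadm
  have hb2 : μ E ≤ A ^ (1/2 : ℝ) * (μ E) ^ (1/2 : ℝ) :=
    hb.trans (mul_le_mul_right (ENNReal.rpow_le_rpow henergy (by norm_num)) _)
  by_cases hE0 : μ E = 0
  · rw [hE0]; exact zero_le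
  · have hhalf0 : (μ E) ^ (1/2 : ℝ) ≠ 0 := by
      simp [ENNReal.rpow_eq_zero_iff, hE0, hμE_top]
    have hhalftop : (μ E) ^ (1/2 : ℝ) ≠ ⊤ :=
      (ENNReal.rpow_lt_top_of_nonneg (by norm_num) hμE_top).ne
    have hsplit : μ E = (μ E) ^ (1/2 : ℝ) * (μ E) ^ (1/2 : ℝ) := half_mul_self.symm
    have hkey : (μ E) ^ (1/2 : ℝ) * (μ E) ^ (1/2 : ℝ)
        ≤ A ^ (1/2 : ℝ) * (μ E) ^ (1/2 : ℝ) := hsplit ▸ hb2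
    have hle : (μ E) ^ (1/2 : ℝ) ≤ A ^ (1/2 : ℝ) :=
      (ENNReal.mul_le_mul_iff_left hhalf0 hhalftop).mp hkey
    have := ENNReal.rpow_le_rpow hle (by norm_num : (0:ℝ) ≤ 2)
    rwa [sq_half, sq_half] at this
end
end

section
/- Let 0 ≤ s_1 < 1 and let π_1 be the one-variable standard polynomial weight π_1(γ) = 2^{s_1 d_T(γ)} on T. Then there is a constant C depending only on s_1 (one may take C = 10/(1−s_1)) such that for every vertex β_1 ∈ T and every τ_1 ∈ T̄, (1/M(∂S(β_1))) ∫_{∂S(β_1)} d_{π_1}(τ_1 ∧ ω_1) dM(ω_1) ≤ C · d_{π_1}(τ_1 ∧ β_1). -/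
open MeasureTheory ENNReal Set
open scoped Classical

noncomputable section

namespace St6

lemma mem_bSucc1 {c : TreeV} {ω : TreeB} : ω ∈ bSucc1 c ↔ ∀ i : Fin c.length, c.get i = ω i :=
  Iff.rfl

lemma ancOf_inl_inl {b c : TreeV} : ancOf (Sum.inl b) (Sum.inl c) ↔ c <+: b := Iff.rfl

lemma prefix_of_mem {c b : TreeV} {ω : TreeB} (h : ω ∈ bSucc1 c) (hb : ω ∈ bSucc1 b)
    (hlen : c.length ≤ b.length) : c <+: b := by
  rw [List.prefix_iff_eq_take]
  apply List.ext_getElem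
  · simp [hlen]
  · intro i h1 h2
    have hc := h ⟨i, h1⟩
    have hib : i < b.length := lt_of_lt_of_le h1 hlen
    have hbb := hb ⟨i, hib⟩
    simp only [List.get_eq_getElem] at hc hbb
    rw [List.getElem_take]
    rw [hc, hbb]

lemma comparable_of_mem {c b : TreeV} {ω : TreeB} (hc : ω ∈ bSucc1 c) (hb : ω ∈ bSucc1 b) :
    c <+: b ∨ b <+: c := by
  rcases le_total c.length b.length with h | h
  · exact Or.inl (prefix_of_mem hc hb h)
  · exact Or.inr (prefix_of_mem hb hc h)

lemma bSucc1_mono {c b : TreeV} (h : c <+: b) : bSucc1 b ⊆ bSucc1 c := by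
  intro ω hω i
  have := hω ⟨i.1, lt_of_lt_of_le i.2 h.length_le⟩
  simp only [List.get_eq_getElem] at this ⊢
  rw [h.getElem i.2]
  exact this

lemma measurableSet_bSucc1 (c : TreeV) : MeasurableSet (bSucc1 c) := by
  have : bSucc1 c = ⋂ i : Fin c.length, (fun ω : TreeB => ω i.1) ⁻¹' {c.get i} := by
    ext ω
    simp only [Set.mem_iInter, Set.mem_preimage, Set.mem_singleton_iff, mem_bSucc1]
    exact ⟨fun h i => (h i).symm, fun h i => (h i).symm⟩
  rw [this]
  exact MeasurableSet.iInter fun i => (measurable_pi_apply i.1) (measurableSet_singleton _)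

lemma P_anti {τ : TreeBar} {c b : TreeV} (h : ancOf τ (Sum.inl c)) (hb : b <+: c) :
    ancOf τ (Sum.inl b) := by
  cases τ with
  | inl t => exact hb.trans h
  | inr ω =>
    intro i
    have := h ⟨i.1, lt_of_lt_of_le i.2 hb.length_le⟩
    simp only [List.get_eq_getElem] at this ⊢
    rw [hb.getElem i.2]
    exact this

lemma P_inj {τ : TreeBar} {c c' : TreeV} (h : ancOf τ (Sum.inl c)) (h' : ancOf τ (Sum.inl c'))
    (hl : c.length = c'.length) : c = c' := by
  cases τ with
  | inl t =>
    have h1 : c = List.take c.length t := List.prefix_iff_eq_take.1 h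
    have h2 : c' = List.take c'.length t := List.prefix_iff_eq_take.1 h'
    rw [h1, h2, hl]
  | inr ω =>
    apply List.ext_getElem hl
    intro i h1 h2
    have a := h ⟨i, h1⟩
    have b := h' ⟨i, h2⟩
    simp only [List.get_eq_getElem] at a b
    rw [a, b]


lemma pow_calc (s : ℝ) (b n : ℕ) (h : b + 1 ≤ n) :
    (2 : ℝ≥0∞) ^ (s * ((n : ℝ) + 1)) * ((2 : ℝ≥0∞)⁻¹) ^ n
      = (2 : ℝ≥0∞) ^ (s * ((b : ℝ) + 1)) * ((2 : ℝ≥0∞)⁻¹) ^ b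
        * ((2 : ℝ≥0∞) ^ (s - 1 : ℝ)) ^ (n - (b + 1) + 1) := by
  have e1 : ∀ m : ℕ, ((2 : ℝ≥0∞)⁻¹) ^ m = (2 : ℝ≥0∞) ^ ((-1 : ℝ) * m) := fun m => by
    rw [← ENNReal.rpow_neg_one, ← ENNReal.rpow_natCast ((2 : ℝ≥0∞) ^ (-1 : ℝ)) m,
      ← ENNReal.rpow_mul]
  have e2 : ((2 : ℝ≥0∞) ^ (s - 1 : ℝ)) ^ (n - (b + 1) + 1)
      = (2 : ℝ≥0∞) ^ ((s - 1) * ((n - (b + 1) + 1 : ℕ) : ℝ)) := by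
    rw [← ENNReal.rpow_natCast ((2 : ℝ≥0∞) ^ (s - 1 : ℝ)) _, ← ENNReal.rpow_mul]
  rw [e1, e1, e2, ← ENNReal.rpow_add _ _ (by norm_num) (by norm_num),
    ← ENNReal.rpow_add _ _ (by norm_num) (by norm_num),
    ← ENNReal.rpow_add _ _ (by norm_num) (by norm_num)]
  congr 1
  have hc : ((n - (b + 1) + 1 : ℕ) : ℝ) = (n : ℝ) - b := by
    rw [Nat.cast_add, Nat.cast_sub h]
    push_cast
    ring
  rw [hc]
  ring

end St6

open St6

/-- for the standard polynomial weight `π₁(γ) = 2^{s₁ d_T(γ)}`, `0 ≤ s₁ < 1`,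
the average of `d_{π₁}(τ₁ ∧ ·)` over `∂S(β₁)` w.r.t. `M` is at most `C(s₁) · d_{π₁}(τ₁ ∧ β₁)`. -/
theorem statement6 (s₁ : ℝ) (hs0 : 0 ≤ s₁) (hs1 : s₁ < 1) :
    ∃ C : ℝ≥0∞, C ≠ ⊤ ∧
      ∀ M : Measure TreeB, IsStdM M →
        ∀ (β : TreeV) (τ : TreeBar),
          (M (bSucc1 β))⁻¹ * ∫⁻ ω in bSucc1 β, dwedge1 (stdW1 s₁) τ (Sum.inr ω) ∂M
            ≤ C * dwedge1 (stdW1 s₁) τ (Sum.inl β) := by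
  classical
  have h2ne0 : (2 : ℝ≥0∞) ≠ 0 := by norm_num
  have h2net : (2 : ℝ≥0∞) ≠ ⊤ := by norm_num
  set r : ℝ≥0∞ := (2 : ℝ≥0∞) ^ ((s₁ - 1 : ℝ)) with hr
  have hrlt1 : r < 1 := by
    have : r < (2 : ℝ≥0∞) ^ (0 : ℝ) := by
      apply ENNReal.rpow_lt_rpow_of_exponent_lt (by norm_num) h2net
      linarith
    simpa using this
  have hsub0 : (1 : ℝ≥0∞) - r ≠ 0 := fun h =>
    absurd (tsub_eq_zero_iff_le.mp h) (not_le.2 hrlt1)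
  refine ⟨1 + (1 - r)⁻¹, ENNReal.add_ne_top.2 ⟨one_ne_top, ENNReal.inv_ne_top.2 hsub0⟩, ?_⟩
  intro M hM β τ
  set π := stdW1 s₁ with hπdef
  have hπval : ∀ c : TreeV, π c = (2 : ℝ≥0∞) ^ (s₁ * ((c.length : ℝ) + 1)) := by
    intro c
    rw [hπdef]
    unfold stdW1 dT
    congr 1
    push_cast
    ring
  set k : ℝ≥0∞ := ((2 : ℝ≥0∞)⁻¹) ^ β.length with hk
  have hk0 : k ≠ 0 := pow_ne_zero _ (by norm_num)
  have hktop : k ≠ ⊤ := ENNReal.pow_ne_top (by norm_num)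
  -- Step 1: rewrite the integrand
  have hfun : ∀ ω : TreeB, dwedge1 π τ (Sum.inr ω)
      = ∑' c : TreeV, (bSucc1 c).indicator
          (fun _ => Set.indicator {c : TreeV | ancOf τ (Sum.inl c)} π c) ω := by
    intro ω
    unfold dwedge1
    refine tsum_congr fun c => ?_
    by_cases h1 : ancOf τ (Sum.inl c) <;> by_cases h2 : ω ∈ bSucc1 c
    · rw [Set.indicator_of_mem (show c ∈ {c : TreeV | ancOf τ (Sum.inl c) ∧ ancOf (Sum.inr ω) (Sum.inl c)} from ⟨h1, h2⟩),
        Set.indicator_of_mem h2, Set.indicator_of_mem (show c ∈ {c : TreeV | ancOf τ (Sum.inl c)} from h1)]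
    · rw [Set.indicator_of_notMem (show c ∉ {c : TreeV | ancOf τ (Sum.inl c) ∧ ancOf (Sum.inr ω) (Sum.inl c)} from fun hmem => h2 hmem.2),
        Set.indicator_of_notMem h2]
    · rw [Set.indicator_of_notMem (show c ∉ {c : TreeV | ancOf τ (Sum.inl c) ∧ ancOf (Sum.inr ω) (Sum.inl c)} from fun hmem => h1 hmem.1),
        Set.indicator_of_mem h2, Set.indicator_of_notMem (show c ∉ {c : TreeV | ancOf τ (Sum.inl c)} from h1)]
    · rw [Set.indicator_of_notMem (show c ∉ {c : TreeV | ancOf τ (Sum.inl c) ∧ ancOf (Sum.inr ω) (Sum.inl c)} from fun hmem => h1 hmem.1),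
        Set.indicator_of_notMem h2]
  -- Step 2: compute the integral as a sum
  have hmeas : ∀ c : TreeV, AEMeasurable
      ((bSucc1 c).indicator
        (fun _ => Set.indicator {c : TreeV | ancOf τ (Sum.inl c)} π c) : TreeB → ℝ≥0∞)
      (M.restrict (bSucc1 β)) :=
    fun c => (measurable_const.indicator (measurableSet_bSucc1 c)).aemeasurable
  have hint : ∫⁻ ω in bSucc1 β, dwedge1 π τ (Sum.inr ω) ∂M
      = ∑' c : TreeV,
          Set.indicator {c : TreeV | ancOf τ (Sum.inl c)} π c * M (bSucc1 c ∩ bSucc1 β) := by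
    simp only [hfun]
    rw [lintegral_tsum hmeas]
    refine tsum_congr fun c => ?_
    rw [lintegral_indicator_const (measurableSet_bSucc1 c),
      Measure.restrict_apply (measurableSet_bSucc1 c)]
  -- Step 3: the measure of the intersection of two cylinders
  have hm : ∀ c : TreeV, M (bSucc1 c ∩ bSucc1 β)
      = if c <+: β then k else if β <+: c then ((2 : ℝ≥0∞)⁻¹) ^ c.length else 0 := by
    intro c
    by_cases h1 : c <+: β
    · rw [if_pos h1, Set.inter_eq_right.mpr (bSucc1_mono h1), hM β, ← hk]
    · rw [if_neg h1]
      by_cases h2 : β <+: c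
      · rw [if_pos h2, Set.inter_eq_left.mpr (bSucc1_mono h2), hM c]
      · rw [if_neg h2]
        have he : bSucc1 c ∩ bSucc1 β = ∅ := by
          ext ω
          simp only [Set.mem_inter_iff, Set.mem_empty_iff_false, iff_false, not_and]
          intro a b
          rcases comparable_of_mem a b with h | h
          exacts [h1 h, h2 h]
        rw [he, measure_empty]
  -- Step 4: split each term into the "ancestor" part and the "tail" part
  have hsplit : ∀ c : TreeV,
      Set.indicator {c : TreeV | ancOf τ (Sum.inl c)} π c * M (bSucc1 c ∩ bSucc1 β)
      = Set.indicator {c : TreeV | ancOf τ (Sum.inl c) ∧ ancOf (Sum.inl β) (Sum.inl c)} π c * k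
        + Set.indicator {c : TreeV | ancOf τ (Sum.inl c) ∧ β <+: c ∧ c ≠ β}
            (fun c => π c * ((2 : ℝ≥0∞)⁻¹) ^ c.length) c := by
    intro c
    rw [hm c]
    by_cases h1 : ancOf τ (Sum.inl c)
    · by_cases h2 : c <+: β
      · rw [if_pos h2, Set.indicator_of_mem (show c ∈ {c : TreeV | ancOf τ (Sum.inl c) ∧ ancOf (Sum.inl β) (Sum.inl c)} from ⟨h1, h2⟩),
          Set.indicator_of_mem (show c ∈ {c : TreeV | ancOf τ (Sum.inl c)} from h1),
          Set.indicator_of_notMem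
            (show c ∉ {c : TreeV | ancOf τ (Sum.inl c) ∧ β <+: c ∧ c ≠ β} from fun hmem =>
              hmem.2.2 (hmem.2.1.eq_of_length
                (le_antisymm hmem.2.1.length_le h2.length_le)).symm),
          add_zero]
      · rw [if_neg h2, Set.indicator_of_mem (show c ∈ {c : TreeV | ancOf τ (Sum.inl c)} from h1),
          Set.indicator_of_notMem (show c ∉ {c : TreeV | ancOf τ (Sum.inl c) ∧ ancOf (Sum.inl β) (Sum.inl c)} from fun hmem => h2 hmem.2)]
        by_cases h3 : β <+: c
        · have hne : c ≠ β := fun h => h2 (h ▸ List.prefix_refl c)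
          rw [if_pos h3, Set.indicator_of_mem (show c ∈ {c : TreeV | ancOf τ (Sum.inl c) ∧ β <+: c ∧ c ≠ β} from ⟨h1, h3, hne⟩),
            zero_mul, zero_add]
        · rw [if_neg h3,
            Set.indicator_of_notMem (show c ∉ {c : TreeV | ancOf τ (Sum.inl c) ∧ β <+: c ∧ c ≠ β} from fun hmem => h3 hmem.2.1), mul_zero,
            zero_mul, add_zero]
    · rw [Set.indicator_of_notMem (show c ∉ {c : TreeV | ancOf τ (Sum.inl c)} from h1),
        Set.indicator_of_notMem (show c ∉ {c : TreeV | ancOf τ (Sum.inl c) ∧ ancOf (Sum.inl β) (Sum.inl c)} from fun hmem => h1 hmem.1),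
        Set.indicator_of_notMem (show c ∉ {c : TreeV | ancOf τ (Sum.inl c) ∧ β <+: c ∧ c ≠ β} from fun hmem => h1 hmem.1),
        zero_mul, zero_mul, add_zero]
  set B : ℝ≥0∞ := ∑' c : TreeV,
      Set.indicator {c : TreeV | ancOf τ (Sum.inl c) ∧ β <+: c ∧ c ≠ β}
        (fun c => π c * ((2 : ℝ≥0∞)⁻¹) ^ c.length) c with hBdef
  have hWdef : dwedge1 π τ (Sum.inl β)
      = ∑' c : TreeV,
          Set.indicator {c : TreeV | ancOf τ (Sum.inl c) ∧ ancOf (Sum.inl β) (Sum.inl c)} π c :=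
    rfl
  have hdecomp : ∫⁻ ω in bSucc1 β, dwedge1 π τ (Sum.inr ω) ∂M
      = dwedge1 π τ (Sum.inl β) * k + B := by
    rw [hint, tsum_congr hsplit, ENNReal.tsum_add, ENNReal.tsum_mul_right, hBdef, hWdef]
  -- Step 5: bound the tail sum B
  have key : k⁻¹ * (dwedge1 π τ (Sum.inl β) * k + B)
      ≤ (1 + (1 - r)⁻¹) * dwedge1 π τ (Sum.inl β) := by
    have h1 : k⁻¹ * (dwedge1 π τ (Sum.inl β) * k) = dwedge1 π τ (Sum.inl β) := by
      rw [mul_comm (dwedge1 π τ (Sum.inl β)) k, ← mul_assoc,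
        ENNReal.inv_mul_cancel hk0 hktop, one_mul]
    by_cases hPβ : ancOf τ (Sum.inl β)
    · have hWlb : π β ≤ dwedge1 π τ (Sum.inl β) := by
        rw [hWdef]
        have h := ENNReal.le_tsum (a := β)
          (f := fun c : TreeV => Set.indicator
            {c : TreeV | ancOf τ (Sum.inl c) ∧ ancOf (Sum.inl β) (Sum.inl c)} π c)
        rwa [Set.indicator_of_mem
          (show β ∈ {c : TreeV | ancOf τ (Sum.inl c) ∧ ancOf (Sum.inl β) (Sum.inl c)} from
            ⟨hPβ, List.prefix_refl β⟩)] at h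
      set f : TreeV → ℝ≥0∞ := fun c =>
        Set.indicator {c : TreeV | ancOf τ (Sum.inl c) ∧ β <+: c ∧ c ≠ β}
          (fun c => π c * ((2 : ℝ≥0∞)⁻¹) ^ c.length) c with hfdef
      have hmem : ∀ c ∈ Function.support f,
          ancOf τ (Sum.inl c) ∧ β <+: c ∧ c ≠ β := by
        intro c hc
        by_contra h
        apply hc
        show Set.indicator {c : TreeV | ancOf τ (Sum.inl c) ∧ β <+: c ∧ c ≠ β}
          (fun c => π c * ((2 : ℝ≥0∞)⁻¹) ^ c.length) c = 0
        exact Set.indicator_of_notMem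
          (show c ∉ {c : TreeV | ancOf τ (Sum.inl c) ∧ β <+: c ∧ c ≠ β} from h) _
      have hlen : ∀ c ∈ Function.support f, β.length + 1 ≤ c.length := by
        intro c hc
        obtain ⟨-, h3, h4⟩ := hmem c hc
        rcases lt_or_eq_of_le h3.length_le with h | h
        · omega
        · exact absurd (h3.eq_of_length h).symm h4
      have hpoint : ∀ c : Function.support f,
          f c.1 ≤ π β * k * r ^ (c.1.length - (β.length + 1) + 1) := by
        rintro ⟨c, hc⟩
        obtain ⟨hP, h3, h4⟩ := hmem c hc
        have hl := hlen c hc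
        have hfc : f c = π c * ((2 : ℝ≥0∞)⁻¹) ^ c.length :=
          Set.indicator_of_mem
            (show c ∈ {c : TreeV | ancOf τ (Sum.inl c) ∧ β <+: c ∧ c ≠ β} from ⟨hP, h3, h4⟩) _
        rw [hfc, hπval, hπval, hk, hr]
        exact le_of_eq (pow_calc s₁ β.length c.length hl)
      have hinj : Function.Injective
          (fun c : Function.support f => c.1.length - (β.length + 1)) := by
        rintro ⟨c, hc⟩ ⟨c', hc'⟩ h
        simp only at h
        have l1 := hlen c hc
        have l2 := hlen c' hc'
        have hleq : c.length = c'.length := by omega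
        exact Subtype.ext (P_inj (hmem c hc).1 (hmem c' hc').1 hleq)
      have hgeom : ∑' j : ℕ, r ^ (j + 1) ≤ (1 - r)⁻¹ := by
        have hstep : ∑' j : ℕ, r ^ (j + 1) ≤ ∑' j : ℕ, r ^ j := by
          refine ENNReal.tsum_le_tsum fun j => ?_
          rw [pow_succ]
          calc r ^ j * r ≤ r ^ j * 1 := mul_le_mul_right hrlt1.le _
            _ = r ^ j := mul_one _
        rwa [ENNReal.tsum_geometric] at hstep
      have htail : B ≤ π β * k * (1 - r)⁻¹ := by
        calc B = ∑' c : Function.support f, f c.1 :=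
              (tsum_subtype_eq_of_support_subset subset_rfl).symm
          _ ≤ ∑' c : Function.support f,
                π β * k * r ^ (c.1.length - (β.length + 1) + 1) :=
              ENNReal.tsum_le_tsum hpoint
          _ ≤ ∑' j : ℕ, π β * k * r ^ (j + 1) :=
              tsum_comp_le_tsum_of_injective hinj (fun j => π β * k * r ^ (j + 1))
          _ = π β * k * ∑' j : ℕ, r ^ (j + 1) := ENNReal.tsum_mul_left
          _ ≤ π β * k * (1 - r)⁻¹ := mul_le_mul_right hgeom _
      calc k⁻¹ * (dwedge1 π τ (Sum.inl β) * k + B)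
          = dwedge1 π τ (Sum.inl β) + k⁻¹ * B := by rw [mul_add, h1]
        _ ≤ dwedge1 π τ (Sum.inl β) + k⁻¹ * (π β * k * (1 - r)⁻¹) :=
            add_le_add_right (mul_le_mul_right htail _) _
        _ = dwedge1 π τ (Sum.inl β) + π β * (1 - r)⁻¹ := by
            rw [show π β * k * (1 - r)⁻¹ = k * (π β * (1 - r)⁻¹) by ring, ← mul_assoc,
              ENNReal.inv_mul_cancel hk0 hktop, one_mul]
        _ ≤ dwedge1 π τ (Sum.inl β) + dwedge1 π τ (Sum.inl β) * (1 - r)⁻¹ :=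
            add_le_add_right (mul_le_mul_left hWlb _) _
        _ = (1 + (1 - r)⁻¹) * dwedge1 π τ (Sum.inl β) := by ring
    · have hB0 : B = 0 := by
        rw [hBdef]
        refine ENNReal.tsum_eq_zero.mpr fun c => ?_
        exact Set.indicator_of_notMem
          (show c ∉ {c : TreeV | ancOf τ (Sum.inl c) ∧ β <+: c ∧ c ≠ β} from
            fun hmem => hPβ (P_anti hmem.1 hmem.2.1)) _
      rw [hB0, add_zero, h1]
      exact le_mul_of_one_le_left (zero_le) le_self_add
  rw [hM β, ← hk, hdecomp]
  exact key
end
end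

section
/- Let π be a standard polynomial product weight on T^d with exponents 0 ≤ s_j < 1. Then for all vertices α, β ∈ T^d: (i) d_π(α∧β) ≤ (1/(M_d(∂S(α)) M_d(∂S(β)))) ∫_{∂S(α)} ∫_{∂S(β)} d_π(ξ∧ω) dM_d(ξ) dM_d(ω), and (ii) the double average on the right-hand side is at most C · d_π(α∧β), where C depends only on d and s_1, …, s_d. -/
open MeasureTheory ENNReal Set
open scoped Classical

noncomputable section

namespace St7

/-! ### One-variable basics -/

/-- `w s n = 2^(s(n+1))`. -/
def w (s : ℝ) (n : ℕ) : ℝ≥0∞ := (2 : ℝ≥0∞) ^ (s * ((n : ℝ) + 1))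

/-- `e n = 2^(-n)`. -/
def e (n : ℕ) : ℝ≥0∞ := (2⁻¹ : ℝ≥0∞) ^ n

/-- `r s = 2^(s-1)`. -/
def r (s : ℝ) : ℝ≥0∞ := (2 : ℝ≥0∞) ^ (s - 1)

def q (M : Measure TreeB) (a g : TreeV) : ℝ≥0∞ := M (bSucc1 a ∩ bSucc1 g)

def D1 (s : ℝ) (a b : TreeV) : ℝ≥0∞ :=
  ∑' g : TreeV, Set.indicator {g : TreeV | g <+: a ∧ g <+: b} (fun g => w s g.length) g

def F1 (s : ℝ) (M : Measure TreeB) (a b : TreeV) : ℝ≥0∞ :=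
  ∑' g : TreeV, w s g.length * q M a g * q M b g

lemma two_ne_top : (2 : ℝ≥0∞) ≠ ⊤ := by norm_num

lemma e_rpow (n : ℕ) : e n = (2 : ℝ≥0∞) ^ (-(n : ℝ)) := by
  rw [e, ← ENNReal.rpow_neg_one 2, ← ENNReal.rpow_natCast ((2:ℝ≥0∞) ^ (-1:ℝ)) n,
    ← ENNReal.rpow_mul]
  norm_num

lemma r_pow (s : ℝ) (i : ℕ) : (r s) ^ i = (2 : ℝ≥0∞) ^ ((s - 1) * (i : ℝ)) := by
  rw [r, ← ENNReal.rpow_natCast ((2:ℝ≥0∞) ^ (s-1)) i, ← ENNReal.rpow_mul]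

lemma two_rpow_add (x y : ℝ) : (2 : ℝ≥0∞) ^ (x + y) = 2 ^ x * 2 ^ y :=
  ENNReal.rpow_add x y two_ne_zero two_ne_top

lemma e_pos (n : ℕ) : e n ≠ 0 := by
  rw [e_rpow]; exact (ENNReal.rpow_pos (by norm_num) two_ne_top).ne'

lemma two_rpow_ne_top (x : ℝ) : (2 : ℝ≥0∞) ^ x ≠ ⊤ := by
  simp [ENNReal.rpow_eq_top_iff]

lemma e_ne_top (n : ℕ) : e n ≠ ⊤ := by
  rw [e_rpow]; exact two_rpow_ne_top _

lemma e_add (m n : ℕ) : e (m + n) = e m * e n := pow_add _ _ _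

lemma w_ne_top (s : ℝ) (n : ℕ) : w s n ≠ ⊤ := two_rpow_ne_top _

/-- Key identity: `w s (m+i) * e i = w s m * r s ^ i`. -/
lemma w_e_key (s : ℝ) (m i : ℕ) : w s (m + i) * e i = w s m * (r s) ^ i := by
  rw [e_rpow, r_pow, w, w, ← two_rpow_add, ← two_rpow_add]
  congr 1
  push_cast
  ring

lemma two_pow_mul_e (m n : ℕ) : (2 : ℝ≥0∞) ^ n * e (m + n) = e m := by
  have h1 : (2:ℝ≥0∞)^n * (2⁻¹:ℝ≥0∞)^n = 1 := by
    rw [← mul_pow, ENNReal.mul_inv_cancel two_ne_zero two_ne_top, one_pow]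
  calc (2:ℝ≥0∞)^n * e (m+n) = e m * ((2:ℝ≥0∞)^n * (2⁻¹:ℝ≥0∞)^n) := by
        simp only [e, pow_add]; ring
    _ = e m := by rw [h1, mul_one]

lemma r_lt_one {s : ℝ} (hs : s < 1) : r s < 1 :=
  ENNReal.rpow_lt_one_of_one_lt_of_neg (by norm_num) (by linarith)

/-! ### List prefix facts -/

lemma prefix_of_bSucc1 {a g : TreeV} {ω : TreeB} (ha : ω ∈ bSucc1 a) (hg : ω ∈ bSucc1 g)
    (h : a.length ≤ g.length) : a <+: g := by
  have ha' : ∀ i : Fin a.length, a.get i = ω i := ha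
  have hg' : ∀ i : Fin g.length, g.get i = ω i := hg
  rw [List.prefix_iff_eq_take]
  apply List.ext_get
  · simp [h]
  · intro n h1 h2
    have hn : n < a.length := h1
    have hng : n < g.length := lt_of_lt_of_le hn h
    have e1 := ha' ⟨n, hn⟩
    have e2 := hg' ⟨n, hng⟩
    simp only [List.get_eq_getElem] at *
    rw [e1, List.getElem_take]
    exact e2.symm

lemma bSucc1_mono {g a : TreeV} (h : g <+: a) : bSucc1 a ⊆ bSucc1 g := by
  intro ω hω
  have hω' : ∀ i : Fin a.length, a.get i = ω i := hω
  intro i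
  have hi : (i : ℕ) < a.length := lt_of_lt_of_le i.2 h.length_le
  have := hω' ⟨i, hi⟩
  simp only [List.get_eq_getElem] at *
  rw [← this, h.getElem i.2]

lemma q_eq_left {M : Measure TreeB} (hM : IsStdM M) {a g : TreeV} (h : g <+: a) :
    q M a g = e a.length := by
  rw [q, Set.inter_eq_left.2 (bSucc1_mono h), hM a]; rfl

lemma q_eq_right {M : Measure TreeB} (hM : IsStdM M) {a g : TreeV} (h : a <+: g) :
    q M a g = e g.length := by
  rw [q, Set.inter_eq_right.2 (bSucc1_mono h), hM g]; rfl

lemma q_eq_zero {M : Measure TreeB} {a g : TreeV} (h1 : ¬ g <+: a) (h2 : ¬ a <+: g) :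
    q M a g = 0 := by
  have : bSucc1 a ∩ bSucc1 g = ∅ := by
    ext ω
    simp only [Set.mem_inter_iff, Set.mem_empty_iff_false, iff_false, not_and]
    intro ha hg
    rcases le_total a.length g.length with h | h
    · exact h2 (prefix_of_bSucc1 ha hg h)
    · exact h1 (prefix_of_bSucc1 hg ha h)
  rw [q, this, measure_empty]

end St7

namespace St7

lemma D1_comm (s : ℝ) (a b : TreeV) : D1 s a b = D1 s b a := by
  unfold D1
  congr 1
  ext g
  congr 1
  ext x
  exact and_comm

lemma F1_comm (s : ℝ) (M : Measure TreeB) (a b : TreeV) : F1 s M a b = F1 s M b a := by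
  unfold F1
  exact tsum_congr fun g => by ring

/-- Lower bound, one variable. -/
lemma lower1 {M : Measure TreeB} (hM : IsStdM M) (s : ℝ) (a b : TreeV) :
    e a.length * e b.length * D1 s a b ≤ F1 s M a b := by
  rw [D1, ← ENNReal.tsum_mul_left]
  apply ENNReal.tsum_le_tsum
  intro g
  by_cases h : g ∈ {g : TreeV | g <+: a ∧ g <+: b}
  · rw [Set.indicator_of_mem h, q_eq_left hM h.1, q_eq_left hM h.2]
    ring_nf
    exact le_rfl
  · rw [Set.indicator_of_notMem h, mul_zero]
    exact zero_le

lemma D1_ge_w {s : ℝ} {a b : TreeV} (h : a <+: b) : w s a.length ≤ D1 s a b := by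
  have := ENNReal.le_tsum (f := fun g : TreeV =>
    Set.indicator {g : TreeV | g <+: a ∧ g <+: b} (fun g => w s g.length) g) a
  rwa [Set.indicator_of_mem (by exact ⟨List.prefix_refl a, h⟩)] at this

/-- results about comparability -/
lemma comparable_of_q_ne {M : Measure TreeB} (hM : IsStdM M) {a g : TreeV}
    (h : q M a g ≠ 0) : g <+: a ∨ a <+: g := by
  by_contra hc
  push_neg at hc
  exact h (q_eq_zero hc.1 hc.2)

/-- Sum over lists of a function of length. -/
instance (n : ℕ) : Fintype {t : List Bool // t.length = n} :=
  (inferInstance : Fintype (List.Vector Bool n))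

lemma tsum_length (h : ℕ → ℝ≥0∞) :
    ∑' t : List Bool, h t.length = ∑' n : ℕ, 2 ^ n * h n := by
  have hcard : ∀ n : ℕ, Fintype.card {t : List Bool // t.length = n} = 2 ^ n := by
    intro n
    rw [show Fintype.card {t : List Bool // t.length = n}
        = Fintype.card (List.Vector Bool n) from Fintype.card_congr (Equiv.refl _)]
    rw [card_vector, Fintype.card_bool]
  calc ∑' t : List Bool, h t.length
      = ∑' c : Σ y : ℕ, {x : List Bool // x.length = y},
          h ((Equiv.sigmaFiberEquiv (List.length : List Bool → ℕ)) c).length := by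
        rw [(Equiv.sigmaFiberEquiv (List.length : List Bool → ℕ)).tsum_eq
          (f := fun t : List Bool => h t.length)]
    _ = ∑' c : Σ y : ℕ, {x : List Bool // x.length = y},
          (fun (n : ℕ) (_ : {x : List Bool // x.length = n}) => h n) c.1 c.2 := by
        apply tsum_congr
        rintro ⟨n, t, ht⟩
        simp only [Equiv.sigmaFiberEquiv]
        exact congrArg h ht
    _ = ∑' n : ℕ, ∑' _t : {x : List Bool // x.length = n}, h n := ENNReal.tsum_sigma (fun (n : ℕ) (_ : {x : List Bool // x.length = n}) => h n)
    _ = ∑' n : ℕ, 2 ^ n * h n := by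
        apply tsum_congr
        intro n
        rw [tsum_fintype, Finset.sum_const, Finset.card_univ, hcard n, nsmul_eq_mul]
        push_cast
        ring

end St7

namespace St7

lemma compat_incomp {a b g : TreeV} (hab : a.length ≤ b.length) (hnab : ¬ a <+: b)
    (hga : g <+: a ∨ a <+: g) (hgb : g <+: b ∨ b <+: g) : g <+: a ∧ g <+: b := by
  rcases hga with hga | hga
  · rcases hgb with hgb | hgb
    · exact ⟨hga, hgb⟩
    · have hba : b <+: a := hgb.trans hga
      have hb : b = a := hba.eq_of_length (le_antisymm hba.length_le hab)
      subst hb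
      exact absurd (List.prefix_refl b) hnab
  · rcases hgb with hgb | hgb
    · exact absurd (hga.trans hgb) hnab
    · rcases List.prefix_or_prefix_of_prefix hga hgb with h | h
      · exact absurd h hnab
      · have hb : b = a := h.eq_of_length (le_antisymm h.length_le hab)
        subst hb
        exact absurd (List.prefix_refl b) hnab

lemma geom_le {s : ℝ} (hs1 : s < 1) : ∑' i : ℕ, (r s) ^ (i + 1) ≤ (1 - r s)⁻¹ := by
  rw [ENNReal.tsum_geometric_add_one]
  exact mul_le_of_le_one_left (zero_le) (r_lt_one hs1).le

lemma w_e_mono (s : ℝ) (m k : ℕ) : w s (m + k) * e (m + k) = w s m * e m * (r s) ^ k := by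
  rw [e_add]
  calc w s (m + k) * (e m * e k) = (w s (m + k) * e k) * e m := by ring
    _ = w s m * (r s) ^ k * e m := by rw [w_e_key]
    _ = w s m * e m * (r s) ^ k := by ring

/-- The `E1` (between `a` and `b`) part of the sum. -/
lemma sum2_le {M : Measure TreeB} {s : ℝ} (hs1 : s < 1)
    {a b : TreeV} (hab : a.length ≤ b.length) (hpre : a <+: b) :
    ∑' g : TreeV, Set.indicator {g : TreeV | a <+: g ∧ g <+: b ∧ g ≠ a}
        (fun g => w s g.length * e g.length * e b.length) g
      ≤ (1 - r s)⁻¹ * (e a.length * e b.length * D1 s a b) := by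
  set S2 : Set TreeV := {g : TreeV | a <+: g ∧ g <+: b ∧ g ≠ a} with hS2
  have hinj : Function.Injective (fun k : Fin (b.length + 1) => b.take (k : ℕ)) := by
    intro k1 k2 hk
    have hk' : b.take (k1 : ℕ) = b.take (k2 : ℕ) := hk
    have hlen : (b.take (k1 : ℕ)).length = (b.take (k2 : ℕ)).length := by rw [hk']
    rw [List.length_take, List.length_take,
      min_eq_left (Nat.lt_succ_iff.1 k1.2), min_eq_left (Nat.lt_succ_iff.1 k2.2)] at hlen
    exact Fin.ext hlen
  have hsupp : Function.support (Set.indicator S2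
      (fun g : TreeV => w s g.length * e g.length * e b.length)) ⊆
      Set.range (fun k : Fin (b.length + 1) => b.take (k : ℕ)) := by
    intro g hg
    have hmem : g ∈ S2 := by
      by_contra h
      exact hg (Set.indicator_of_notMem h _)
    refine ⟨⟨g.length, Nat.lt_succ_of_le hmem.2.1.length_le⟩, ?_⟩
    exact (List.prefix_iff_eq_take.1 hmem.2.1).symm
  have hterm : ∀ k : Fin (b.length + 1),
      Set.indicator S2 (fun g : TreeV => w s g.length * e g.length * e b.length)
        (b.take (k : ℕ))
      ≤ (if a.length < (k : ℕ) then w s (k : ℕ) * e (k : ℕ) * e b.length else 0) := by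
    intro k
    have hkb : (k : ℕ) ≤ b.length := Nat.lt_succ_iff.1 k.2
    have hlen : (b.take (k : ℕ)).length = (k : ℕ) := by
      rw [List.length_take, min_eq_left hkb]
    by_cases h : b.take (k : ℕ) ∈ S2
    · have hmk : a.length < (k : ℕ) := by
        rcases lt_or_eq_of_le (h.1.length_le.trans_eq hlen) with h' | h'
        · exact h'
        · exact absurd (h.1.eq_of_length (by rw [hlen, h'])).symm h.2.2
      rw [Set.indicator_of_mem h, hlen, if_pos hmk]
    · rw [Set.indicator_of_notMem h]
      exact zero_le
  have hinj2 : Function.Injective (fun i : ℕ => a.length + 1 + i) := by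
    intro i j h
    have h' : a.length + 1 + i = a.length + 1 + j := h
    omega
  have hsupp2 : Function.support (fun k : ℕ =>
      if a.length < k then w s k * e k * e b.length else 0) ⊆
      Set.range (fun i : ℕ => a.length + 1 + i) := by
    intro k hk
    have hlt : a.length < k := by
      by_contra h
      exact hk (if_neg h)
    exact ⟨k - (a.length + 1), by show a.length + 1 + (k - (a.length + 1)) = k; omega⟩
  have hw : w s a.length ≤ D1 s a b := D1_ge_w hpre
  calc ∑' g : TreeV, Set.indicator S2
        (fun g : TreeV => w s g.length * e g.length * e b.length) g
      = ∑' k : Fin (b.length + 1), Set.indicator S2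
          (fun g : TreeV => w s g.length * e g.length * e b.length) (b.take (k : ℕ)) :=
        (hinj.tsum_eq hsupp).symm
    _ = ∑ k : Fin (b.length + 1), Set.indicator S2
          (fun g : TreeV => w s g.length * e g.length * e b.length) (b.take (k : ℕ)) :=
        tsum_fintype _
    _ ≤ ∑ k : Fin (b.length + 1),
          (if a.length < (k : ℕ) then w s (k : ℕ) * e (k : ℕ) * e b.length else 0) :=
        Finset.sum_le_sum fun k _ => hterm k
    _ = ∑ k ∈ Finset.range (b.length + 1),
          (if a.length < k then w s k * e k * e b.length else 0) :=
        Fin.sum_univ_eq_sum_range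
          (fun k : ℕ => if a.length < k then w s k * e k * e b.length else 0) _
    _ ≤ ∑' k : ℕ, (if a.length < k then w s k * e k * e b.length else 0) :=
        ENNReal.sum_le_tsum _
    _ = ∑' i : ℕ, (if a.length < a.length + 1 + i
          then w s (a.length + 1 + i) * e (a.length + 1 + i) * e b.length else 0) :=
        (hinj2.tsum_eq
          (f := fun k : ℕ => if a.length < k then w s k * e k * e b.length else 0)
          hsupp2).symm
    _ = ∑' i : ℕ, (w s a.length * e a.length * e b.length) * (r s) ^ (i + 1) := by
        apply tsum_congr
        intro i
        rw [if_pos (by omega : a.length < a.length + 1 + i),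
          (by omega : a.length + 1 + i = a.length + (i + 1)), w_e_mono]
        ring
    _ = (w s a.length * e a.length * e b.length) * ∑' i : ℕ, (r s) ^ (i + 1) :=
        ENNReal.tsum_mul_left
    _ ≤ (w s a.length * e a.length * e b.length) * (1 - r s)⁻¹ :=
        mul_le_mul_right (geom_le hs1) _
    _ ≤ (1 - r s)⁻¹ * (e a.length * e b.length * D1 s a b) := by
        rw [mul_comm]
        apply mul_le_mul_right
        calc w s a.length * e a.length * e b.length
            = e a.length * e b.length * w s a.length := by ring
          _ ≤ e a.length * e b.length * D1 s a b := mul_le_mul_right hw _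

/-- The `E2` (below `b`) part of the sum. -/
lemma sum3_le {M : Measure TreeB} {s : ℝ} (hs1 : s < 1)
    {a b : TreeV} (hab : a.length ≤ b.length) (hpre : a <+: b) :
    ∑' g : TreeV, Set.indicator {g : TreeV | b <+: g ∧ g ≠ b}
        (fun g => w s g.length * e g.length * e g.length) g
      ≤ (1 - r s)⁻¹ * (e a.length * e b.length * D1 s a b) := by
  set S3 : Set TreeV := {g : TreeV | b <+: g ∧ g ≠ b} with hS3
  have hinj : Function.Injective (fun t : List Bool => b ++ t) :=
    fun t1 t2 h => List.append_cancel_left h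
  have hsupp : Function.support (Set.indicator S3
      (fun g : TreeV => w s g.length * e g.length * e g.length)) ⊆
      Set.range (fun t : List Bool => b ++ t) := by
    intro g hg
    have hmem : g ∈ S3 := by
      by_contra h
      exact hg (Set.indicator_of_notMem h _)
    obtain ⟨t, rfl⟩ := hmem.1
    exact ⟨t, rfl⟩
  have hinj2 : Function.Injective Nat.succ := fun i j h => by omega
  have hw : w s a.length ≤ D1 s a b := D1_ge_w hpre
  calc ∑' g : TreeV, Set.indicator S3
        (fun g : TreeV => w s g.length * e g.length * e g.length) g
      = ∑' t : List Bool, Set.indicator S3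
          (fun g : TreeV => w s g.length * e g.length * e g.length) (b ++ t) :=
        (hinj.tsum_eq hsupp).symm
    _ = ∑' t : List Bool, (if t.length = 0 then 0
          else w s (b.length + t.length) * e (b.length + t.length)
            * e (b.length + t.length)) := by
        apply tsum_congr
        intro t
        rcases eq_or_ne t [] with rfl | ht
        · rw [List.append_nil,
            Set.indicator_of_notMem (fun h : b ∈ S3 => h.2 rfl)]
          simp
        · have hlt : t.length ≠ 0 := fun h => ht (List.length_eq_zero_iff.1 h)
          have hne : b ++ t ≠ b := by
            intro h
            have := congrArg List.length h
            rw [List.length_append] at this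
            omega
          rw [Set.indicator_of_mem (show b ++ t ∈ S3 from ⟨List.prefix_append b t, hne⟩),
            if_neg hlt, List.length_append]
    _ = ∑' k : ℕ, 2 ^ k * (if k = 0 then 0
          else w s (b.length + k) * e (b.length + k) * e (b.length + k)) :=
        tsum_length (fun k : ℕ => if k = 0 then 0
          else w s (b.length + k) * e (b.length + k) * e (b.length + k))
    _ = ∑' i : ℕ, 2 ^ (i + 1) * (if i + 1 = 0 then 0
          else w s (b.length + (i + 1)) * e (b.length + (i + 1))
            * e (b.length + (i + 1))) := by
        refine (hinj2.tsum_eq (f := fun k : ℕ => 2 ^ k * (if k = 0 then 0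
          else w s (b.length + k) * e (b.length + k) * e (b.length + k))) ?_).symm
        intro k hk
        rcases Nat.eq_zero_or_pos k with rfl | hpos
        · simp at hk
        · exact ⟨k - 1, by show (k - 1).succ = k; omega⟩
    _ = ∑' i : ℕ, (w s b.length * e b.length * e b.length) * (r s) ^ (i + 1) := by
        apply tsum_congr
        intro i
        rw [if_neg (Nat.succ_ne_zero i)]
        calc (2 : ℝ≥0∞) ^ (i + 1) * (w s (b.length + (i + 1)) * e (b.length + (i + 1))
              * e (b.length + (i + 1)))
            = (w s (b.length + (i + 1)) * e (b.length + (i + 1)))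
                * ((2 : ℝ≥0∞) ^ (i + 1) * e (b.length + (i + 1))) := by ring
          _ = (w s b.length * e b.length * (r s) ^ (i + 1)) * e b.length := by
              rw [w_e_mono, two_pow_mul_e]
          _ = (w s b.length * e b.length * e b.length) * (r s) ^ (i + 1) := by ring
    _ = (w s b.length * e b.length * e b.length) * ∑' i : ℕ, (r s) ^ (i + 1) :=
        ENNReal.tsum_mul_left
    _ ≤ (w s b.length * e b.length * e b.length) * (1 - r s)⁻¹ :=
        mul_le_mul_right (geom_le hs1) _
    _ ≤ (1 - r s)⁻¹ * (e a.length * e b.length * D1 s a b) := by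
        have hkey := w_e_mono s a.length (b.length - a.length)
        rw [Nat.add_sub_cancel' hab] at hkey
        have h6 : w s b.length * e b.length ≤ w s a.length * e a.length := by
          rw [hkey]
          calc w s a.length * e a.length * (r s) ^ (b.length - a.length)
              ≤ w s a.length * e a.length * 1 :=
                mul_le_mul_right (pow_le_one' (r_lt_one hs1).le _) _
            _ = w s a.length * e a.length := mul_one _
        calc (w s b.length * e b.length * e b.length) * (1 - r s)⁻¹
            = (1 - r s)⁻¹ * ((w s b.length * e b.length) * e b.length) := by ring
          _ ≤ (1 - r s)⁻¹ * ((w s a.length * e a.length) * e b.length) :=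
              mul_le_mul_right (mul_le_mul_left h6 _) _
          _ ≤ (1 - r s)⁻¹ * (e a.length * e b.length * D1 s a b) := by
              apply mul_le_mul_right
              calc w s a.length * e a.length * e b.length
                  = e a.length * e b.length * w s a.length := by ring
                _ ≤ e a.length * e b.length * D1 s a b := mul_le_mul_right hw _

/-- Core upper bound assuming `|a| ≤ |b|`. -/
lemma upper_core {M : Measure TreeB} (hM : IsStdM M) {s : ℝ} (hs1 : s < 1)
    {a b : TreeV} (hab : a.length ≤ b.length) :
    F1 s M a b ≤ (1 + 2 * (1 - r s)⁻¹) * (e a.length * e b.length * D1 s a b) := by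
  by_cases hpre : a <+: b
  case neg =>
    have h1 : F1 s M a b ≤ e a.length * e b.length * D1 s a b := by
      rw [D1, ← ENNReal.tsum_mul_left, F1]
      apply ENNReal.tsum_le_tsum
      intro g
      by_cases hqa : q M a g = 0
      · rw [hqa, mul_zero, zero_mul]; exact zero_le
      by_cases hqb : q M b g = 0
      · rw [hqb, mul_zero]; exact zero_le
      have hg := compat_incomp hab hpre (comparable_of_q_ne hM hqa) (comparable_of_q_ne hM hqb)
      rw [q_eq_left hM hg.1, q_eq_left hM hg.2,
        Set.indicator_of_mem (show g ∈ {g : TreeV | g <+: a ∧ g <+: b} from hg)]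
      ring_nf; exact le_rfl
    calc F1 s M a b ≤ e a.length * e b.length * D1 s a b := h1
      _ ≤ (1 + 2 * (1 - r s)⁻¹) * (e a.length * e b.length * D1 s a b) := by
          nth_rewrite 1 [← one_mul (e a.length * e b.length * D1 s a b)]
          exact mul_le_mul_left le_self_add _
  case pos =>
    have hpt : ∀ g : TreeV, w s g.length * q M a g * q M b g ≤
        Set.indicator {g : TreeV | g <+: a}
          (fun g : TreeV => w s g.length * e a.length * e b.length) g
        + Set.indicator {g : TreeV | a <+: g ∧ g <+: b ∧ g ≠ a}
          (fun g : TreeV => w s g.length * e g.length * e b.length) g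
        + Set.indicator {g : TreeV | b <+: g ∧ g ≠ b}
          (fun g : TreeV => w s g.length * e g.length * e g.length) g := by
      intro g
      by_cases hqa : q M a g = 0
      · rw [hqa, mul_zero, zero_mul]; exact zero_le
      by_cases hqb : q M b g = 0
      · rw [hqb, mul_zero]; exact zero_le
      have hga := comparable_of_q_ne hM hqa
      have hgb := comparable_of_q_ne hM hqb
      by_cases h1 : g <+: a
      · have h2 : g <+: b := h1.trans hpre
        rw [q_eq_left hM h1, q_eq_left hM h2,
          ← Set.indicator_of_mem (show g ∈ {g : TreeV | g <+: a} from h1)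
            (fun g : TreeV => w s g.length * e a.length * e b.length)]
        exact le_add_right (le_add_right le_rfl)
      · have hag : a <+: g := hga.resolve_left h1
        have hne : g ≠ a := fun h => h1 (h ▸ List.prefix_refl g)
        by_cases h2 : g <+: b
        · rw [q_eq_right hM hag, q_eq_left hM h2,
            ← Set.indicator_of_mem
              (show g ∈ {g : TreeV | a <+: g ∧ g <+: b ∧ g ≠ a} from ⟨hag, h2, hne⟩)
              (fun g : TreeV => w s g.length * e g.length * e b.length)]
          exact le_add_right le_add_self
        · have hbg : b <+: g := hgb.resolve_left h2
          have hneb : g ≠ b := fun h => h2 (h ▸ List.prefix_refl g)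
          rw [q_eq_right hM hag, q_eq_right hM hbg,
            ← Set.indicator_of_mem
              (show g ∈ {g : TreeV | b <+: g ∧ g ≠ b} from ⟨hbg, hneb⟩)
              (fun g : TreeV => w s g.length * e g.length * e g.length)]
          exact le_add_self
    have hS1 : ∑' g : TreeV, Set.indicator {g : TreeV | g <+: a}
        (fun g : TreeV => w s g.length * e a.length * e b.length) g
        = e a.length * e b.length * D1 s a b := by
      rw [D1, ← ENNReal.tsum_mul_left]
      apply tsum_congr
      intro g
      by_cases h : g <+: a
      · rw [Set.indicator_of_mem (show g ∈ {g : TreeV | g <+: a} from h),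
          Set.indicator_of_mem (show g ∈ {g : TreeV | g <+: a ∧ g <+: b} from
            ⟨h, h.trans hpre⟩)]
        ring
      · rw [Set.indicator_of_notMem (show g ∉ {g : TreeV | g <+: a} from h),
          Set.indicator_of_notMem (fun hc : g ∈ {g : TreeV | g <+: a ∧ g <+: b} => h hc.1),
          mul_zero]
    calc F1 s M a b ≤ _ + _ + _ := by
          rw [F1, ← ENNReal.tsum_add, ← ENNReal.tsum_add]
          exact ENNReal.tsum_le_tsum hpt
      _ ≤ (e a.length * e b.length * D1 s a b)
            + (1 - r s)⁻¹ * (e a.length * e b.length * D1 s a b)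
            + (1 - r s)⁻¹ * (e a.length * e b.length * D1 s a b) :=
          add_le_add (add_le_add hS1.le (sum2_le (M := M) hs1 hab hpre))
            (sum3_le (M := M) hs1 hab hpre)
      _ = (1 + 2 * (1 - r s)⁻¹) * (e a.length * e b.length * D1 s a b) := by ring

lemma upper1 {M : Measure TreeB} (hM : IsStdM M) {s : ℝ} (hs1 : s < 1) (a b : TreeV) :
    F1 s M a b ≤ (1 + 2 * (1 - r s)⁻¹) * (e a.length * e b.length * D1 s a b) := by
  rcases le_total a.length b.length with h | h
  · exact upper_core hM hs1 h
  · rw [F1_comm, D1_comm, show e a.length * e b.length = e b.length * e a.length from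
      mul_comm _ _]
    exact upper_core hM hs1 h

lemma C1_ne_top {s : ℝ} (hs1 : s < 1) : (1 + 2 * (1 - r s)⁻¹ : ℝ≥0∞) ≠ ⊤ := by
  have h : (1 - r s) ≠ 0 := by
    simp only [ne_eq, tsub_eq_zero_iff_le, not_le]
    exact r_lt_one hs1
  simp [ENNReal.add_ne_top, ENNReal.mul_ne_top, ENNReal.inv_ne_top.2 h]

end St7

namespace St7

/-- Factorization of a tsum over a finite product of countable types. -/
lemma tsum_pi_prod {X : Type} [Countable X] :
    ∀ (d : ℕ) (f : Fin d → X → ℝ≥0∞),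
      ∑' γ : Fin d → X, ∏ j, f j (γ j) = ∏ j, ∑' g : X, f j g := by
  intro d
  induction d with
  | zero =>
      intro f
      rw [Finset.univ_eq_empty, Finset.prod_empty]
      have h1 : ∀ γ : Fin 0 → X, (∏ j, f j (γ j)) = 1 := by
        intro γ; rw [Finset.univ_eq_empty, Finset.prod_empty]
      calc ∑' γ : Fin 0 → X, ∏ j, f j (γ j) = ∑' _γ : Fin 0 → X, (1 : ℝ≥0∞) :=
            tsum_congr h1
        _ = 1 := by
            rw [tsum_eq_single (default : Fin 0 → X)
              (fun b hb => absurd (Subsingleton.elim b default) hb)]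
  | succ n ih =>
      intro f
      have he := (Fin.consEquiv (fun _ : Fin (n + 1) => X)).tsum_eq
        (f := fun γ : Fin (n + 1) → X => ∏ j, f j (γ j))
      calc ∑' γ : Fin (n + 1) → X, ∏ j, f j (γ j)
          = ∑' p : X × (Fin n → X), ∏ j, f j ((Fin.consEquiv fun _ => X) p j) := he.symm
        _ = ∑' p : X × (Fin n → X), f 0 p.1 * ∏ j : Fin n, f j.succ (p.2 j) := by
            apply tsum_congr
            intro p
            rw [Fin.prod_univ_succ]
            simp [Fin.consEquiv]
        _ = ∑' x : X, ∑' y : Fin n → X, f 0 x * ∏ j : Fin n, f j.succ (y j) :=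
            ENNReal.tsum_prod'
        _ = ∑' x : X, f 0 x * ∑' y : Fin n → X, ∏ j : Fin n, f j.succ (y j) := by
            apply tsum_congr; intro x; exact ENNReal.tsum_mul_left
        _ = (∑' x : X, f 0 x) * ∑' y : Fin n → X, ∏ j : Fin n, f j.succ (y j) :=
            ENNReal.tsum_mul_right
        _ = (∑' x : X, f 0 x) * ∏ j : Fin n, ∑' g : X, f j.succ g := by
            rw [ih (fun j => f j.succ)]
        _ = ∏ j, ∑' g : X, f j g :=
            (Fin.prod_univ_succ (fun j : Fin (n + 1) => ∑' g : X, f j g)).symm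

lemma bSucc1_measurable (g : TreeV) : MeasurableSet (bSucc1 g) := by
  have h : bSucc1 g = ⋂ i : Fin g.length, (fun ω : TreeB => ω (i : ℕ)) ⁻¹' {g.get i} := by
    ext ω
    simp only [bSucc1, ancOf, Set.mem_setOf_eq, Set.mem_iInter, Set.mem_preimage,
      Set.mem_singleton_iff]
    constructor
    · intro h i; exact (h i).symm
    · intro h i; exact (h i).symm
  rw [h]
  exact MeasurableSet.iInter fun i =>
    (measurable_pi_apply (i : ℕ)) (show MeasurableSet {g.get i} from trivial)

lemma bSucc_eq_pi {d : ℕ} (α : VtxD d) :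
    bSucc α = Set.pi Set.univ (fun j => bSucc1 (α j)) := by
  ext ω
  constructor
  · intro h j _; exact h j
  · intro h j; exact h j (Set.mem_univ j)

lemma bSucc_measurable {d : ℕ} (α : VtxD d) : MeasurableSet (bSucc α) := by
  rw [bSucc_eq_pi]; exact MeasurableSet.univ_pi fun j => bSucc1_measurable (α j)

lemma pi_bSucc (M : Measure TreeB) [SigmaFinite M] {d : ℕ} (α : VtxD d) :
    (Measure.pi fun _ : Fin d => M) (bSucc α) = ∏ j, M (bSucc1 (α j)) := by
  rw [bSucc_eq_pi, Measure.pi_pi]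

lemma pi_bSucc_inter (M : Measure TreeB) [SigmaFinite M] {d : ℕ} (α γ : VtxD d) :
    (Measure.pi fun _ : Fin d => M) (bSucc α ∩ bSucc γ) = ∏ j, q M (α j) (γ j) := by
  rw [bSucc_eq_pi, bSucc_eq_pi, ← Set.pi_inter_distrib, Measure.pi_pi]
  rfl

lemma stdW_eq (d : ℕ) (s : Fin d → ℝ) (γ : VtxD d) :
    stdW d s γ = ∏ j, w (s j) (γ j).length := by
  unfold stdW w dT
  apply Finset.prod_congr rfl
  intro j _
  congr 1
  push_cast
  ring

lemma dwedge_v (d : ℕ) (s : Fin d → ℝ) (α β : VtxD d) :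
    dwedge (stdW d s) (vEmb α) (vEmb β) = ∏ j, D1 (s j) (α j) (β j) := by
  rw [dwedge]
  simp only [D1]
  rw [← tsum_pi_prod d (fun j g =>
    Set.indicator {g : TreeV | g <+: α j ∧ g <+: β j} (fun g => w (s j) g.length) g)]
  apply tsum_congr
  intro γ
  by_cases h : ∀ j, γ j <+: α j ∧ γ j <+: β j
  · rw [Set.indicator_of_mem (show γ ∈ {γ : VtxD d | vleOf (vEmb α) γ ∧ vleOf (vEmb β) γ}
      from ⟨fun j => (h j).1, fun j => (h j).2⟩), stdW_eq]
    exact Finset.prod_congr rfl fun j _ => (Set.indicator_of_mem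
      (show γ j ∈ {g : TreeV | g <+: α j ∧ g <+: β j} from h j)
      (fun g : TreeV => w (s j) g.length)).symm
  · obtain ⟨j, hj⟩ := not_forall.1 h
    rw [Set.indicator_of_notMem
      (show γ ∉ {γ : VtxD d | vleOf (vEmb α) γ ∧ vleOf (vEmb β) γ} from
        fun hc => hj ⟨hc.1 j, hc.2 j⟩)]
    exact (Finset.prod_eq_zero (Finset.mem_univ j)
      (Set.indicator_of_notMem
        (show γ j ∉ {g : TreeV | g <+: α j ∧ g <+: β j} from hj)
        (fun g : TreeV => w (s j) g.length))).symm

lemma sum_F (d : ℕ) (s : Fin d → ℝ) (M : Measure TreeB) [SigmaFinite M] (α β : VtxD d) :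
    ∑' γ : VtxD d, stdW d s γ
        * (Measure.pi fun _ : Fin d => M) (bSucc α ∩ bSucc γ)
        * (Measure.pi fun _ : Fin d => M) (bSucc β ∩ bSucc γ)
      = ∏ j, F1 (s j) M (α j) (β j) := by
  simp only [F1]
  rw [← tsum_pi_prod d (fun j g => w (s j) g.length * q M (α j) g * q M (β j) g)]
  apply tsum_congr
  intro γ
  rw [stdW_eq, pi_bSucc_inter, pi_bSucc_inter, ← Finset.prod_mul_distrib,
    ← Finset.prod_mul_distrib]

lemma key_int (M : Measure TreeB) [SigmaFinite M] (d : ℕ) (s : Fin d → ℝ) (α β : VtxD d) :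
    ∫⁻ ξ in bSucc α, ∫⁻ ω in bSucc β, dwedge (stdW d s) (bEmb ξ) (bEmb ω)
        ∂(Measure.pi fun _ : Fin d => M) ∂(Measure.pi fun _ : Fin d => M)
    = ∑' γ : VtxD d, stdW d s γ
        * (Measure.pi fun _ : Fin d => M) (bSucc α ∩ bSucc γ)
        * (Measure.pi fun _ : Fin d => M) (bSucc β ∩ bSucc γ) := by
  have hpoint : ∀ ξ ω : BndD d, dwedge (stdW d s) (bEmb ξ) (bEmb ω)
      = ∑' γ : VtxD d, Set.indicator (bSucc γ)
          (fun _ => Set.indicator (bSucc γ) (fun _ => stdW d s γ) ξ) ω := by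
    intro ξ ω
    apply tsum_congr
    intro γ
    by_cases h1 : ξ ∈ bSucc γ
    · by_cases h2 : ω ∈ bSucc γ
      · rw [Set.indicator_of_mem h2, Set.indicator_of_mem h1,
          Set.indicator_of_mem (show γ ∈ {γ : VtxD d |
            vleOf (bEmb ξ) γ ∧ vleOf (bEmb ω) γ} from ⟨h1, h2⟩)]
      · rw [Set.indicator_of_notMem h2,
          Set.indicator_of_notMem (show γ ∉ {γ : VtxD d |
            vleOf (bEmb ξ) γ ∧ vleOf (bEmb ω) γ} from fun hc => h2 hc.2)]
    · by_cases h2 : ω ∈ bSucc γ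
      · rw [Set.indicator_of_mem h2, Set.indicator_of_notMem h1,
          Set.indicator_of_notMem (show γ ∉ {γ : VtxD d |
            vleOf (bEmb ξ) γ ∧ vleOf (bEmb ω) γ} from fun hc => h1 hc.1)]
      · rw [Set.indicator_of_notMem h2,
          Set.indicator_of_notMem (show γ ∉ {γ : VtxD d |
            vleOf (bEmb ξ) γ ∧ vleOf (bEmb ω) γ} from fun hc => h2 hc.2)]
  have hin : ∀ ξ : BndD d,
      ∫⁻ ω in bSucc β, dwedge (stdW d s) (bEmb ξ) (bEmb ω) ∂(Measure.pi fun _ : Fin d => M)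
      = ∑' γ : VtxD d, Set.indicator (bSucc γ)
          (fun _ => stdW d s γ * (Measure.pi fun _ : Fin d => M) (bSucc γ ∩ bSucc β)) ξ := by
    intro ξ
    calc ∫⁻ ω in bSucc β, dwedge (stdW d s) (bEmb ξ) (bEmb ω)
            ∂(Measure.pi fun _ : Fin d => M)
        = ∫⁻ ω in bSucc β, ∑' γ : VtxD d, Set.indicator (bSucc γ)
            (fun _ => Set.indicator (bSucc γ) (fun _ => stdW d s γ) ξ) ω
            ∂(Measure.pi fun _ : Fin d => M) :=
          lintegral_congr fun ω => hpoint ξ ω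
      _ = ∑' γ : VtxD d, ∫⁻ ω in bSucc β, Set.indicator (bSucc γ)
            (fun _ => Set.indicator (bSucc γ) (fun _ => stdW d s γ) ξ) ω
            ∂(Measure.pi fun _ : Fin d => M) :=
          lintegral_tsum fun γ =>
            (measurable_const.indicator (bSucc_measurable γ)).aemeasurable
      _ = ∑' γ : VtxD d, Set.indicator (bSucc γ)
            (fun _ => stdW d s γ * (Measure.pi fun _ : Fin d => M) (bSucc γ ∩ bSucc β)) ξ := by
          apply tsum_congr
          intro γ
          rw [lintegral_indicator (bSucc_measurable γ), setLIntegral_const,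
            Measure.restrict_apply (bSucc_measurable γ)]
          by_cases h1 : ξ ∈ bSucc γ
          · rw [Set.indicator_of_mem h1, Set.indicator_of_mem h1]
          · rw [Set.indicator_of_notMem h1, Set.indicator_of_notMem h1, zero_mul]
  calc ∫⁻ ξ in bSucc α, ∫⁻ ω in bSucc β, dwedge (stdW d s) (bEmb ξ) (bEmb ω)
          ∂(Measure.pi fun _ : Fin d => M) ∂(Measure.pi fun _ : Fin d => M)
      = ∫⁻ ξ in bSucc α, ∑' γ : VtxD d, Set.indicator (bSucc γ)
          (fun _ => stdW d s γ * (Measure.pi fun _ : Fin d => M) (bSucc γ ∩ bSucc β)) ξ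
          ∂(Measure.pi fun _ : Fin d => M) :=
        lintegral_congr fun ξ => hin ξ
    _ = ∑' γ : VtxD d, ∫⁻ ξ in bSucc α, Set.indicator (bSucc γ)
          (fun _ => stdW d s γ * (Measure.pi fun _ : Fin d => M) (bSucc γ ∩ bSucc β)) ξ
          ∂(Measure.pi fun _ : Fin d => M) :=
        lintegral_tsum fun γ =>
          (measurable_const.indicator (bSucc_measurable γ)).aemeasurable
    _ = ∑' γ : VtxD d, stdW d s γ
          * (Measure.pi fun _ : Fin d => M) (bSucc α ∩ bSucc γ)
          * (Measure.pi fun _ : Fin d => M) (bSucc β ∩ bSucc γ) := by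
        apply tsum_congr
        intro γ
        rw [lintegral_indicator (bSucc_measurable γ), setLIntegral_const,
          Measure.restrict_apply (bSucc_measurable γ),
          Set.inter_comm (bSucc γ) (bSucc β), Set.inter_comm (bSucc γ) (bSucc α)]
        ring

end St7

/-- for a standard polynomial product weight, `d_π(α∧β)` is bounded above by the
double average of `d_π(ξ∧ω)` over `∂S(α) × ∂S(β)` w.r.t. `M_d × M_d`, and the double average
is at most `C(d, s) · d_π(α∧β)`. -/
theorem statement7 (d : ℕ) (s : Fin d → ℝ) (hs0 : ∀ j, 0 ≤ s j) (hs1 : ∀ j, s j < 1) :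
    ∃ C : ℝ≥0∞, C ≠ ⊤ ∧
      ∀ M : Measure TreeB, SigmaFinite M → IsStdM M →
        ∀ α β : VtxD d,
          (dwedge (stdW d s) (vEmb α) (vEmb β)
              ≤ ((Measure.pi fun _ : Fin d => M) (bSucc α) *
                    (Measure.pi fun _ : Fin d => M) (bSucc β))⁻¹ *
                  ∫⁻ ξ in bSucc α, ∫⁻ ω in bSucc β,
                    dwedge (stdW d s) (bEmb ξ) (bEmb ω)
                      ∂(Measure.pi fun _ : Fin d => M) ∂(Measure.pi fun _ : Fin d => M)) ∧
          (((Measure.pi fun _ : Fin d => M) (bSucc α) *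
                  (Measure.pi fun _ : Fin d => M) (bSucc β))⁻¹ *
                ∫⁻ ξ in bSucc α, ∫⁻ ω in bSucc β,
                  dwedge (stdW d s) (bEmb ξ) (bEmb ω)
                    ∂(Measure.pi fun _ : Fin d => M) ∂(Measure.pi fun _ : Fin d => M)
              ≤ C * dwedge (stdW d s) (vEmb α) (vEmb β)) := by
  classical
  refine ⟨∏ j, (1 + 2 * (1 - St7.r (s j))⁻¹), ?_, ?_⟩
  · exact (ENNReal.prod_lt_top fun j _ => lt_top_iff_ne_top.2 (St7.C1_ne_top (hs1 j))).ne
  intro M hσ hM α β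
  haveI := hσ
  have hI : (∫⁻ ξ in bSucc α, ∫⁻ ω in bSucc β,
        dwedge (stdW d s) (bEmb ξ) (bEmb ω)
          ∂(Measure.pi fun _ : Fin d => M) ∂(Measure.pi fun _ : Fin d => M))
      = ∏ j, St7.F1 (s j) M (α j) (β j) :=
    (St7.key_int M d s α β).trans (St7.sum_F d s M α β)
  have hDw : dwedge (stdW d s) (vEmb α) (vEmb β) = ∏ j, St7.D1 (s j) (α j) (β j) :=
    St7.dwedge_v d s α β
  have hA : (Measure.pi fun _ : Fin d => M) (bSucc α) = ∏ j, St7.e (α j).length := by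
    rw [St7.pi_bSucc]
    exact Finset.prod_congr rfl fun j _ => hM (α j)
  have hB : (Measure.pi fun _ : Fin d => M) (bSucc β) = ∏ j, St7.e (β j).length := by
    rw [St7.pi_bSucc]
    exact Finset.prod_congr rfl fun j _ => hM (β j)
  set A := (Measure.pi fun _ : Fin d => M) (bSucc α) with hAdef
  set B := (Measure.pi fun _ : Fin d => M) (bSucc β) with hBdef
  have hAB0 : A * B ≠ 0 := by
    rw [hA, hB]
    exact mul_ne_zero (Finset.prod_ne_zero_iff.2 fun j _ => St7.e_pos _)
      (Finset.prod_ne_zero_iff.2 fun j _ => St7.e_pos _)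
  have hABt : A * B ≠ ⊤ := by
    rw [hA, hB]
    exact ENNReal.mul_ne_top (ENNReal.prod_lt_top fun j _ => lt_top_iff_ne_top.2 (St7.e_ne_top _)).ne
      (ENNReal.prod_lt_top fun j _ => lt_top_iff_ne_top.2 (St7.e_ne_top _)).ne
  have hbase : A * B * ∏ j, St7.D1 (s j) (α j) (β j)
      = ∏ j, (St7.e (α j).length * St7.e (β j).length * St7.D1 (s j) (α j) (β j)) := by
    rw [hA, hB, ← Finset.prod_mul_distrib, ← Finset.prod_mul_distrib]
  constructor
  · rw [hI, hDw]
    have h1 : A * B * ∏ j, St7.D1 (s j) (α j) (β j)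
        ≤ ∏ j, St7.F1 (s j) M (α j) (β j) := by
      rw [hbase]
      exact Finset.prod_le_prod' fun j _ => St7.lower1 hM (s j) (α j) (β j)
    calc ∏ j, St7.D1 (s j) (α j) (β j)
        = (A * B)⁻¹ * (A * B * ∏ j, St7.D1 (s j) (α j) (β j)) := by
          rw [← mul_assoc, ENNReal.inv_mul_cancel hAB0 hABt, one_mul]
      _ ≤ (A * B)⁻¹ * ∏ j, St7.F1 (s j) M (α j) (β j) := mul_le_mul_right h1 _
  · rw [hI, hDw]
    have h2 : ∏ j, St7.F1 (s j) M (α j) (β j)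
        ≤ (∏ j, (1 + 2 * (1 - St7.r (s j))⁻¹))
          * (A * B * ∏ j, St7.D1 (s j) (α j) (β j)) := by
      rw [hbase, ← Finset.prod_mul_distrib]
      exact Finset.prod_le_prod' fun j _ => St7.upper1 hM (hs1 j) (α j) (β j)
    calc (A * B)⁻¹ * ∏ j, St7.F1 (s j) M (α j) (β j)
        ≤ (A * B)⁻¹ * ((∏ j, (1 + 2 * (1 - St7.r (s j))⁻¹))
            * (A * B * ∏ j, St7.D1 (s j) (α j) (β j))) := mul_le_mul_right h2 _
      _ = (∏ j, (1 + 2 * (1 - St7.r (s j))⁻¹)) * (∏ j, St7.D1 (s j) (α j) (β j))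
            * ((A * B)⁻¹ * (A * B)) := by ring
      _ = (∏ j, (1 + 2 * (1 - St7.r (s j))⁻¹)) * ∏ j, St7.D1 (s j) (α j) (β j) := by
          rw [ENNReal.inv_mul_cancel hAB0 hABt, mul_one]
end
end
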